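/- arXiv:1503.08086 — 7 statements merged into one kernel-verified Lean document; each statement's English description precedes it below -/
import Mathlib

section
/- Let q > 0, p ∈ (0,1), α ∈ (0,1), and let G = (V,E) be a finite graph, and write π = p/(1−p) and π' = π(1−α). For the α-thinning pair (v,w) and any configuration v₀ with P(v = v₀) > 0, the conditional law of w given v = v₀ is: for every configuration ω ≥ v₀, P(w = ω | v = v₀) = (π')^{o(ω)−o(v₀)} q^{k(ω)} / Σ_{ω' ≥ v₀} (π')^{o(ω')−o(v₀)} q^{k(ω')}, and P(w = ω | v = v₀) = 0 if ω does not satisfy ω ≥ v₀. (This is exactly the statement that, conditionally on v, the configuration w − v is an FK-percolation configuration on the graph G/v obtained by collapsing the open edges of v, with parameter p' satisfying π(p') = π(p)(1−α).) -/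
open Finset

noncomputable section

/-- The number of open edges of a configuration `w : E → Bool`. -/
def openCount {E : Type*} [Fintype E] (w : E → Bool) : ℕ :=
  (Finset.univ.filter fun e => w e = true).card

/-- The simple graph on the vertex set `V` spanned by the open edges of `w`. -/
def spanned {V E : Type*} (ends : E → Sym2 V) (w : E → Bool) : SimpleGraph V :=
  SimpleGraph.fromEdgeSet {s | ∃ e, w e = true ∧ ends e = s}

/-- `k(w)`: the number of connected components of the graph spanned by the open
edges of `w` (isolated vertices count as components). -/
def compCount {V E : Type*} (ends : E → Sym2 V) (w : E → Bool) : ℕ :=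
  Nat.card ((spanned ends w).ConnectedComponent)

/-- The FK weight `π^{o(w)} q^{k(w)}` of a configuration, where `π = p/(1-p)`. -/
def fkWeight {V E : Type*} [Fintype E] (ends : E → Sym2 V) (π q : ℝ) (w : E → Bool) : ℝ :=
  π ^ openCount w * q ^ compCount ends w

/-- The FK partition function `Z`. -/
def fkZ {V E : Type*} [Fintype E] [DecidableEq E] (ends : E → Sym2 V) (π q : ℝ) : ℝ :=
  ∑ w : E → Bool, fkWeight ends π q w

/-- The FK-percolation probability of a configuration `w`. -/
def fkP {V E : Type*} [Fintype E] [DecidableEq E] (ends : E → Sym2 V) (π q : ℝ)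
    (w : E → Bool) : ℝ :=
  fkWeight ends π q w / fkZ ends π q

/-- The joint law of the `α`-thinning pair `(v,w)`: `w` is FK-distributed and `v`
is obtained from `w` by keeping each open edge open with probability `α`. -/
def thinP {V E : Type*} [Fintype E] [DecidableEq E] (ends : E → Sym2 V) (π q α : ℝ)
    (v w : E → Bool) : ℝ :=
  if ∀ e, v e = true → w e = true then
    fkP ends π q w * α ^ openCount v * (1 - α) ^ (openCount w - openCount v)
  else 0

/-- conditionally on `v = v₀`, the configuration `w` of the α-thinning
pair is FK-distributed "above `v₀`" with parameter `π' = π(1-α)`: the conditional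
probability of `w = ω` equals
`(π')^{o(ω)-o(v₀)} q^{k(ω)} / Σ_{ω' ≥ v₀} (π')^{o(ω')-o(v₀)} q^{k(ω')}` for `ω ≥ v₀`,
and vanishes otherwise. -/
theorem thinning_conditional_law {V E : Type*} [Fintype V] [Fintype E] [DecidableEq E]
    (ends : E → Sym2 V) (h_inj : Function.Injective ends)
    (h_nondiag : ∀ e, ¬ (ends e).IsDiag)
    (p q α : ℝ) (hq : 0 < q) (hp0 : 0 < p) (hp1 : p < 1) (hα0 : 0 < α) (hα1 : α < 1)
    (π : ℝ) (hπ : π = p / (1 - p))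
    (v₀ : E → Bool)
    (hpos : 0 < ∑ w : E → Bool, thinP ends π q α v₀ w) (ω : E → Bool) :
    ((∀ e, v₀ e = true → ω e = true) →
      thinP ends π q α v₀ ω / (∑ w : E → Bool, thinP ends π q α v₀ w) =
        (π * (1 - α)) ^ (openCount ω - openCount v₀) * q ^ compCount ends ω /
          ∑ ω' ∈ Finset.univ.filter (fun ω' : E → Bool => ∀ e, v₀ e = true → ω' e = true),
            (π * (1 - α)) ^ (openCount ω' - openCount v₀) * q ^ compCount ends ω') ∧
    (¬ (∀ e, v₀ e = true → ω e = true) →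
      thinP ends π q α v₀ ω / (∑ w : E → Bool, thinP ends π q α v₀ w) = 0) := by
  have hπpos : 0 < π := hπ ▸ div_pos hp0 (by linarith)
  have hZpos : 0 < fkZ ends π q := by
    apply Finset.sum_pos
    · intro w _
      exact mul_pos (pow_pos hπpos _) (pow_pos hq _)
    · exact ⟨fun _ => false, Finset.mem_univ _⟩
  set C := α ^ openCount v₀ * π ^ openCount v₀ / fkZ ends π q with hC
  have hCpos : 0 < C := div_pos (mul_pos (pow_pos hα0 _) (pow_pos hπpos _)) hZpos
  have key : ∀ w : E → Bool, (∀ e, v₀ e = true → w e = true) →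
      thinP ends π q α v₀ w =
        C * ((π * (1 - α)) ^ (openCount w - openCount v₀) * q ^ compCount ends w) := by
    intro w hw
    have hle : openCount v₀ ≤ openCount w := by
      apply Finset.card_le_card
      intro e he
      simp only [Finset.mem_filter, Finset.mem_univ, true_and] at *
      exact hw e he
    have hpow : π ^ openCount w = π ^ openCount v₀ * π ^ (openCount w - openCount v₀) := by
      rw [← pow_add, Nat.add_sub_cancel' hle]
    rw [thinP, if_pos hw, fkP, fkWeight, hpow, hC, mul_pow]
    field_simp
  have hsum : (∑ w : E → Bool, thinP ends π q α v₀ w) =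
      C * ∑ ω' ∈ Finset.univ.filter (fun ω' : E → Bool => ∀ e, v₀ e = true → ω' e = true),
        (π * (1 - α)) ^ (openCount ω' - openCount v₀) * q ^ compCount ends ω' := by
    rw [Finset.mul_sum,
      ← Finset.sum_filter_of_ne (p := fun ω' : E → Bool => ∀ e, v₀ e = true → ω' e = true)
        (by intro w _ hne; by_contra h; exact hne (by rw [thinP, if_neg h]))]
    exact Finset.sum_congr rfl fun w hw => key w (Finset.mem_filter.mp hw).2
  constructor
  · intro hω
    rw [key ω hω, hsum, mul_div_mul_left _ _ hCpos.ne']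
  · intro h
    rw [thinP, if_neg h, zero_div]

end
end

section
/- Let q > 0, α ∈ (0,1), let G = (V,E) be a finite graph, and let p̄ = (p_e)_{e ∈ E} with each p_e ∈ (0,1). Define π'_e = π(p_e)(1−α) for each e. For the α-thinning pair (v,w) of the edge-weighted FK measure P_{p̄,q,G}, and any configuration v₀ with P(v = v₀) > 0, the conditional law of w given v = v₀ is: for every configuration ω ≥ v₀, P(w = ω | v = v₀) = (Π_{e : ω(e)=1, v₀(e)=0} π'_e) q^{k(ω)} / Σ_{ω' ≥ v₀} (Π_{e : ω'(e)=1, v₀(e)=0} π'_e) q^{k(ω')}, and this conditional probability is 0 unless ω ≥ v₀. -/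
open Finset

noncomputable section

/-- The FK weight `(Π_{e open} π_e) q^{k(w)}` of a configuration, for
edge-dependent parameters `π_e = p_e/(1-p_e)`. -/
def fkWeightBar {V E : Type*} [Fintype E] (ends : E → Sym2 V) (πb : E → ℝ) (q : ℝ)
    (w : E → Bool) : ℝ :=
  (∏ e ∈ Finset.univ.filter fun e => w e = true, πb e) * q ^ compCount ends w

/-- The FK partition function for edge-dependent parameters. -/
def fkZBar {V E : Type*} [Fintype E] [DecidableEq E] (ends : E → Sym2 V) (πb : E → ℝ)
    (q : ℝ) : ℝ :=
  ∑ w : E → Bool, fkWeightBar ends πb q w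

/-- The FK-percolation probability of a configuration `w`, for edge-dependent
parameters. -/
def fkPBar {V E : Type*} [Fintype E] [DecidableEq E] (ends : E → Sym2 V) (πb : E → ℝ)
    (q : ℝ) (w : E → Bool) : ℝ :=
  fkWeightBar ends πb q w / fkZBar ends πb q

/-- The joint law of the `α`-thinning pair `(v,w)` for edge-dependent parameters. -/
def thinPBar {V E : Type*} [Fintype E] [DecidableEq E] (ends : E → Sym2 V) (πb : E → ℝ)
    (q α : ℝ) (v w : E → Bool) : ℝ :=
  if ∀ e, v e = true → w e = true then
    fkPBar ends πb q w * α ^ openCount v * (1 - α) ^ (openCount w - openCount v)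
  else 0

/-- for the edge-weighted FK measure, conditionally on `v = v₀` the
configuration `w` of the α-thinning pair is FK-distributed above `v₀` with edge
parameters `π'_e = π(p_e)(1-α)`. -/
theorem thinning_conditional_law_edge_weights {V E : Type*} [Fintype V] [Fintype E]
    [DecidableEq E]
    (ends : E → Sym2 V) (h_inj : Function.Injective ends)
    (h_nondiag : ∀ e, ¬ (ends e).IsDiag)
    (q α : ℝ) (hq : 0 < q) (hα0 : 0 < α) (hα1 : α < 1)
    (pb : E → ℝ) (hpb : ∀ e, pb e ∈ Set.Ioo (0 : ℝ) 1)
    (πb πb' : E → ℝ) (hπb : ∀ e, πb e = pb e / (1 - pb e))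
    (hπb' : ∀ e, πb' e = (pb e / (1 - pb e)) * (1 - α))
    (v₀ : E → Bool)
    (hpos : 0 < ∑ w : E → Bool, thinPBar ends πb q α v₀ w) (ω : E → Bool) :
    ((∀ e, v₀ e = true → ω e = true) →
      thinPBar ends πb q α v₀ ω / (∑ w : E → Bool, thinPBar ends πb q α v₀ w) =
        (∏ e ∈ Finset.univ.filter fun e => ω e = true ∧ v₀ e = false, πb' e)
            * q ^ compCount ends ω /
          ∑ ω' ∈ Finset.univ.filter (fun ω' : E → Bool => ∀ e, v₀ e = true → ω' e = true),
            (∏ e ∈ Finset.univ.filter fun e => ω' e = true ∧ v₀ e = false, πb' e)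
              * q ^ compCount ends ω') ∧
    (¬ (∀ e, v₀ e = true → ω e = true) →
      thinPBar ends πb q α v₀ ω / (∑ w : E → Bool, thinPBar ends πb q α v₀ w) = 0) := by
  classical
  set Z := fkZBar ends πb q with hZ
  set C := (∏ e ∈ Finset.univ.filter fun e => v₀ e = true, πb e) * α ^ openCount v₀ / Z with hC
  have key : ∀ w : E → Bool, (∀ e, v₀ e = true → w e = true) →
      thinPBar ends πb q α v₀ w =
        C * ((∏ e ∈ Finset.univ.filter fun e => w e = true ∧ v₀ e = false, πb' e)
              * q ^ compCount ends w) := by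
    intro w hw
    have hsplit : (Finset.univ.filter fun e => w e = true) =
        (Finset.univ.filter fun e => v₀ e = true) ∪
          (Finset.univ.filter fun e => w e = true ∧ v₀ e = false) := by
      ext e
      simp only [Finset.mem_filter, Finset.mem_union, Finset.mem_univ, true_and]
      cases hv : v₀ e
      · simp [hv]
      · simp [hv, hw e hv]
    have hdisj : Disjoint (Finset.univ.filter fun e => v₀ e = true)
        (Finset.univ.filter fun e => w e = true ∧ v₀ e = false) := by
      rw [Finset.disjoint_left]
      intro e he1 he2
      simp only [Finset.mem_filter] at he1 he2
      simp [he1.2] at he2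
    have hcard : openCount w = openCount v₀ +
        ((Finset.univ.filter fun e => w e = true ∧ v₀ e = false)).card := by
      unfold openCount
      rw [hsplit, Finset.card_union_of_disjoint hdisj]
    have hprod : (∏ e ∈ Finset.univ.filter fun e => w e = true, πb e) =
        (∏ e ∈ Finset.univ.filter fun e => v₀ e = true, πb e) *
          ∏ e ∈ Finset.univ.filter (fun e => w e = true ∧ v₀ e = false), πb e := by
      rw [hsplit, Finset.prod_union hdisj]
    have hpow : ((1 - α) ^ (openCount w - openCount v₀)) =
        ∏ _e ∈ Finset.univ.filter (fun e => w e = true ∧ v₀ e = false), (1 - α) := by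
      rw [Finset.prod_const, hcard]
      simp
    have hπ'' : (∏ e ∈ Finset.univ.filter fun e => w e = true ∧ v₀ e = false, πb' e)
        = ∏ e ∈ Finset.univ.filter (fun e => w e = true ∧ v₀ e = false), (πb e * (1 - α)) :=
      Finset.prod_congr rfl (fun e _ => by rw [hπb' e, hπb e])
    unfold thinPBar fkPBar fkWeightBar
    rw [if_pos hw, hprod, hpow, hC, hπ'', Finset.prod_mul_distrib]
    ring
  set P : (E → Bool) → Prop := fun w => ∀ e, v₀ e = true → w e = true with hP
  set S := ∑ ω' ∈ Finset.univ.filter (fun ω' : E → Bool => ∀ e, v₀ e = true → ω' e = true),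
      (∏ e ∈ Finset.univ.filter fun e => ω' e = true ∧ v₀ e = false, πb' e)
        * q ^ compCount ends ω' with hS
  have hsum : (∑ w : E → Bool, thinPBar ends πb q α v₀ w) = C * S := by
    rw [← Finset.sum_filter_add_sum_filter_not Finset.univ P]
    have h2 : ∑ w ∈ Finset.univ.filter (fun w => ¬ P w), thinPBar ends πb q α v₀ w = 0 := by
      apply Finset.sum_eq_zero
      intro w hw
      simp only [Finset.mem_filter] at hw
      unfold thinPBar
      rw [if_neg hw.2]
    rw [h2, add_zero, hS, Finset.mul_sum]
    apply Finset.sum_congr rfl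
    intro w hw
    simp only [Finset.mem_filter] at hw
    exact key w hw.2
  have hCne : C ≠ 0 := by
    intro h
    rw [hsum, h, zero_mul] at hpos
    exact lt_irrefl 0 hpos
  constructor
  · intro hω
    rw [key ω hω, hsum, mul_div_mul_left _ _ hCne]
  · intro hω
    unfold thinPBar
    rw [if_neg hω, zero_div]

end
end

section
/- Let q ≥ 1, let G = (V,E) be a finite graph, and let p̄ = (p_e)_{e ∈ E} with each p_e ∈ (0,1). Then the FK-percolation measure satisfies the positive lattice (FKG lattice) condition: for all configurations w, w', P_{p̄,q,G}(w ∨ w') · P_{p̄,q,G}(w ∧ w') ≥ P_{p̄,q,G}(w) · P_{p̄,q,G}(w'), where (w ∨ w')(e) = max(w(e), w'(e)) and (w ∧ w')(e) = min(w(e), w'(e)). -/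
open Finset

noncomputable section

namespace FKAux

open SimpleGraph

variable {V : Type*}

lemma reach_sup_edge {G : SimpleGraph V} {u v x y : V}
    (h : (G ⊔ SimpleGraph.edge u v).Reachable x y) :
    G.Reachable x y ∨ (G.Reachable x u ∧ G.Reachable v y) ∨
      (G.Reachable x v ∧ G.Reachable u y) := by
  obtain ⟨p⟩ := h
  induction p with
  | nil => exact Or.inl (Reachable.refl _)
  | @cons a b c hab p ih =>
    rcases hab with hab | hab
    · have hr : G.Reachable a b := hab.reachable
      rcases ih with h1 | ⟨h1, h2⟩ | ⟨h1, h2⟩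
      · exact Or.inl (hr.trans h1)
      · exact Or.inr (Or.inl ⟨hr.trans h1, h2⟩)
      · exact Or.inr (Or.inr ⟨hr.trans h1, h2⟩)
    · rw [edge_adj] at hab
      rcases hab.1 with ⟨rfl, rfl⟩ | ⟨rfl, rfl⟩
      · rcases ih with h1 | ⟨h1, h2⟩ | ⟨h1, h2⟩
        · exact Or.inr (Or.inl ⟨Reachable.refl _, h1⟩)
        · exact Or.inr (Or.inl ⟨Reachable.refl _, h2⟩)
        · exact Or.inl h2
      · rcases ih with h1 | ⟨h1, h2⟩ | ⟨h1, h2⟩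
        · exact Or.inr (Or.inr ⟨Reachable.refl _, h1⟩)
        · exact Or.inl h2
        · exact Or.inr (Or.inr ⟨Reachable.refl _, h2⟩)

lemma mk_surjective (G : SimpleGraph V) :
    Function.Surjective (G.connectedComponentMk) :=
  fun c => c.ind fun v => ⟨v, rfl⟩

instance instFiniteCC [Finite V] (G : SimpleGraph V) : Finite G.ConnectedComponent :=
  Finite.of_surjective _ (mk_surjective G)

lemma card_cc_mono [Finite V] {G H : SimpleGraph V} (h : G ≤ H) :
    Nat.card H.ConnectedComponent ≤ Nat.card G.ConnectedComponent := by
  apply Nat.card_le_card_of_surjective (ConnectedComponent.map (Hom.ofLE h))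
  exact fun c => c.ind fun v => ⟨G.connectedComponentMk v, rfl⟩

lemma card_cc_le_of_reach [Finite V] {G : SimpleGraph V} {u v : V}
    (hr : G.Reachable u v) :
    Nat.card G.ConnectedComponent ≤
      Nat.card (G ⊔ SimpleGraph.edge u v).ConnectedComponent := by
  apply Nat.card_le_card_of_injective (ConnectedComponent.map (Hom.ofLE le_sup_left))
  intro c1 c2
  refine ConnectedComponent.ind₂ (fun x y h => ?_) c1 c2
  have hxy : (G ⊔ SimpleGraph.edge u v).Reachable x y :=
    ConnectedComponent.exact h
  apply ConnectedComponent.sound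
  rcases reach_sup_edge hxy with h1 | ⟨h1, h2⟩ | ⟨h1, h2⟩
  · exact h1
  · exact (h1.trans hr).trans h2
  · exact (h1.trans hr.symm).trans h2

lemma card_cc_le_add_one [Finite V] (G : SimpleGraph V) (u v : V) :
    Nat.card G.ConnectedComponent ≤
      Nat.card (G ⊔ SimpleGraph.edge u v).ConnectedComponent + 1 := by
  classical
  haveI : Fintype G.ConnectedComponent := Fintype.ofFinite _
  haveI : Fintype (G ⊔ SimpleGraph.edge u v).ConnectedComponent := Fintype.ofFinite _
  rw [Nat.card_eq_fintype_card, Nat.card_eq_fintype_card]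
  let f : G.ConnectedComponent → (G ⊔ SimpleGraph.edge u v).ConnectedComponent :=
    ConnectedComponent.map (Hom.ofLE le_sup_left)
  have hinj : ((Finset.univ.erase (G.connectedComponentMk u) : Finset _) :
      Set G.ConnectedComponent).InjOn f := by
    intro c1 hc1 c2 hc2 hf
    simp only [coe_erase, Set.mem_diff, Set.mem_singleton_iff, mem_coe, Finset.mem_erase]
      at hc1 hc2
    by_contra hne
    obtain ⟨x, rfl⟩ := mk_surjective G c1
    obtain ⟨y, rfl⟩ := mk_surjective G c2
    have hxy : (G ⊔ SimpleGraph.edge u v).Reachable x y := ConnectedComponent.exact hf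
    rcases reach_sup_edge hxy with h1 | ⟨h1, h2⟩ | ⟨h1, h2⟩
    · exact hne (ConnectedComponent.sound h1)
    · exact hc1.2 (ConnectedComponent.sound h1)
    · exact hc2.2 (ConnectedComponent.sound h2.symm)
  have h1 : (Finset.univ.erase (G.connectedComponentMk u)).card ≤
      (Finset.univ : Finset (G ⊔ SimpleGraph.edge u v).ConnectedComponent).card :=
    Finset.card_le_card_of_injOn f (fun a _ => Finset.mem_univ _) hinj
  have h2 := Finset.card_erase_add_one
    (Finset.mem_univ (G.connectedComponentMk u))
  simp only [Fintype.card, ← h2]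
  omega

lemma card_cc_add_one_le [Finite V] {G : SimpleGraph V} {u v : V} (huv : u ≠ v)
    (hr : ¬ G.Reachable u v) :
    Nat.card (G ⊔ SimpleGraph.edge u v).ConnectedComponent + 1 ≤
      Nat.card G.ConnectedComponent := by
  classical
  haveI : Fintype G.ConnectedComponent := Fintype.ofFinite _
  haveI : Fintype (G ⊔ SimpleGraph.edge u v).ConnectedComponent := Fintype.ofFinite _
  rw [Nat.card_eq_fintype_card, Nat.card_eq_fintype_card]
  let f : G.ConnectedComponent → (G ⊔ SimpleGraph.edge u v).ConnectedComponent :=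
    ConnectedComponent.map (Hom.ofLE le_sup_left)
  have hfu : f (G.connectedComponentMk u) = f (G.connectedComponentMk v) := by
    apply ConnectedComponent.sound
    exact SimpleGraph.Adj.reachable (by
      right
      rw [edge_adj]
      exact ⟨Or.inl ⟨rfl, rfl⟩, huv⟩)
  have hsurj : Set.SurjOn f ((Finset.univ.erase (G.connectedComponentMk v) : Finset _) : Set _)
      ((Finset.univ : Finset (G ⊔ SimpleGraph.edge u v).ConnectedComponent) : Set _) := by
    intro c _
    obtain ⟨x, rfl⟩ := mk_surjective _ c
    by_cases hx : G.connectedComponentMk x = G.connectedComponentMk v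
    · refine ⟨G.connectedComponentMk u, ?_, ?_⟩
      · simp only [coe_erase, Set.mem_diff, Set.mem_singleton_iff, mem_coe]
        refine ⟨Finset.mem_univ _, fun h => hr (ConnectedComponent.exact h)⟩
      · rw [hfu, ← hx]; rfl
    · refine ⟨G.connectedComponentMk x, ?_, rfl⟩
      simp only [coe_erase, Set.mem_diff, Set.mem_singleton_iff, mem_coe]
      exact ⟨Finset.mem_univ _, hx⟩
  have h1 : (Finset.univ : Finset (G ⊔ SimpleGraph.edge u v).ConnectedComponent).card ≤
      (Finset.univ.erase (G.connectedComponentMk v)).card :=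
    Finset.card_le_card_of_surjOn f hsurj
  have h2 := Finset.card_erase_add_one
    (Finset.mem_univ (G.connectedComponentMk v))
  simp only [Fintype.card, ← h2]
  omega

lemma key_step [Finite V] {G H : SimpleGraph V} (hGH : G ≤ H) {u v : V} (huv : u ≠ v) :
    Nat.card H.ConnectedComponent +
        Nat.card (G ⊔ SimpleGraph.edge u v).ConnectedComponent ≤
      Nat.card G.ConnectedComponent +
        Nat.card (H ⊔ SimpleGraph.edge u v).ConnectedComponent := by
  by_cases hr : H.Reachable u v
  · have h1 := card_cc_le_of_reach hr
    have h2 := card_cc_mono (le_sup_left : G ≤ G ⊔ SimpleGraph.edge u v)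
    omega
  · have hrG : ¬ G.Reachable u v := fun h => hr (h.mono hGH)
    have h1 := card_cc_le_add_one H u v
    have h2 := card_cc_add_one_le huv hrG
    omega

lemma spanned_mono {E : Type*} (ends : E → Sym2 V) {w w' : E → Bool}
    (h : ∀ e, w e = true → w' e = true) : spanned ends w ≤ spanned ends w' :=
  SimpleGraph.fromEdgeSet_mono (fun _ ⟨e, he, hs⟩ => ⟨e, h e he, hs⟩)

lemma spanned_add_edge {E : Type*} [DecidableEq E] (ends : E → Sym2 V) (w : E → Bool)
    (x : E) {u v : V} (hx : ends x = s(u, v)) :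
    spanned ends (fun e => w e || decide (e = x)) =
      spanned ends w ⊔ SimpleGraph.edge u v := by
  rw [SimpleGraph.edge, spanned, spanned, ← SimpleGraph.fromEdgeSet_union]
  congr 1
  ext s
  constructor
  · rintro ⟨e, he, rfl⟩
    rcases Bool.or_eq_true_iff.1 he with he | he
    · exact Or.inl ⟨e, he, rfl⟩
    · right
      simp only [decide_eq_true_eq] at he
      subst he
      exact hx
  · rintro (⟨e, he, rfl⟩ | hs)
    · exact ⟨e, by simp [he], rfl⟩
    · exact ⟨x, by simp, by simpa using hx.trans hs.symm⟩

lemma sym2_exists_ne {s : Sym2 V} (h : ¬ s.IsDiag) : ∃ u v, u ≠ v ∧ s = s(u, v) := by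
  induction s using Sym2.ind with
  | _ u v => exact ⟨u, v, fun h' => h (by simp [h', Sym2.mk_isDiag_iff]), rfl⟩

lemma compCount_supermodular_aux {E : Type*} [Fintype V] [Fintype E] [DecidableEq E]
    (ends : E → Sym2 V) (h_nondiag : ∀ e, ¬ (ends e).IsDiag)
    (S : Finset E) (a b : E → Bool) (hab : ∀ e, a e = true → b e = true) :
    compCount ends b + compCount ends (fun e => a e || decide (e ∈ S)) ≤
      compCount ends a + compCount ends (fun e => b e || decide (e ∈ S)) := by
  classical
  induction S using Finset.induction_on with
  | empty =>
    have ha : (fun e => a e || decide (e ∈ (∅ : Finset E))) = a := by funext e; simp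
    have hb : (fun e => b e || decide (e ∈ (∅ : Finset E))) = b := by funext e; simp
    rw [ha, hb]
    omega
  | @insert x S hxS ih =>
    have ha : (fun e => a e || decide (e ∈ insert x S)) =
        (fun e => (a e || decide (e ∈ S)) || decide (e = x)) := by
      funext e
      by_cases he : e = x <;> simp [he, Finset.mem_insert, Bool.or_comm, Bool.or_assoc]
    have hb : (fun e => b e || decide (e ∈ insert x S)) =
        (fun e => (b e || decide (e ∈ S)) || decide (e = x)) := by
      funext e
      by_cases he : e = x <;> simp [he, Finset.mem_insert, Bool.or_comm, Bool.or_assoc]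
    rw [ha, hb]
    obtain ⟨u, v, huv, hx⟩ := sym2_exists_ne (h_nondiag x)
    have hle : spanned ends (fun e => a e || decide (e ∈ S)) ≤
        spanned ends (fun e => b e || decide (e ∈ S)) := by
      apply spanned_mono
      intro e he
      rcases Bool.or_eq_true_iff.1 he with he | he
      · simp [hab e he]
      · simp [he]
    have hstep := key_step hle huv
    have hca : compCount ends (fun e => (a e || decide (e ∈ S)) || decide (e = x)) =
        Nat.card (spanned ends (fun e => a e || decide (e ∈ S)) ⊔
          SimpleGraph.edge u v).ConnectedComponent := by
      rw [compCount, spanned_add_edge ends _ x hx]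
    have hcb : compCount ends (fun e => (b e || decide (e ∈ S)) || decide (e = x)) =
        Nat.card (spanned ends (fun e => b e || decide (e ∈ S)) ⊔
          SimpleGraph.edge u v).ConnectedComponent := by
      rw [compCount, spanned_add_edge ends _ x hx]
    rw [hca, hcb]
    simp only [compCount] at ih hstep ⊢
    omega

end FKAux

/-- the FK-percolation measure with `q ≥ 1` satisfies the positive
lattice (FKG lattice) condition
`P(w ∨ w') P(w ∧ w') ≥ P(w) P(w')`. -/
theorem fk_lattice_condition {V E : Type*} [Fintype V] [Fintype E] [DecidableEq E]
    (ends : E → Sym2 V) (h_inj : Function.Injective ends)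
    (h_nondiag : ∀ e, ¬ (ends e).IsDiag)
    (q : ℝ) (hq : 1 ≤ q)
    (pb : E → ℝ) (hpb : ∀ e, pb e ∈ Set.Ioo (0 : ℝ) 1)
    (πb : E → ℝ) (hπb : ∀ e, πb e = pb e / (1 - pb e))
    (w w' : E → Bool) :
    fkPBar ends πb q w * fkPBar ends πb q w' ≤
      fkPBar ends πb q (fun e => w e || w' e) * fkPBar ends πb q (fun e => w e && w' e) := by
  classical
  -- supermodularity of the component count
  set S : Finset E := Finset.univ.filter (fun e => w e = true ∧ w' e = false) with hS
  have ha_or : (fun e => (w e && w' e) || decide (e ∈ S)) = w := by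
    funext e
    cases hw : w e <;> cases hw' : w' e <;> simp [hS, hw, hw', Finset.mem_filter]
  have hb_or : (fun e => w' e || decide (e ∈ S)) = (fun e => w e || w' e) := by
    funext e
    cases hw : w e <;> cases hw' : w' e <;> simp [hS, hw, hw', Finset.mem_filter]
  have hk := FKAux.compCount_supermodular_aux ends h_nondiag S
    (fun e => w e && w' e) w' (fun e he => (Bool.and_eq_true _ _ ▸ he).2)
  rw [ha_or, hb_or] at hk
  -- hk : k(w') + k(w) ≤ k(w ∧ w') + k(w ∨ w')
  have hkexp : compCount ends w + compCount ends w' ≤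
      compCount ends (fun e => w e || w' e) + compCount ends (fun e => w e && w' e) := by
    omega
  -- products of edge weights
  have hπpos : ∀ e, 0 < πb e := by
    intro e
    have h := hpb e
    rw [hπb e]
    exact div_pos h.1 (by linarith [h.2])
  have hq0 : 0 < q := lt_of_lt_of_le one_pos hq
  have hunion : (Finset.univ.filter fun e => (w e || w' e) = true) =
      (Finset.univ.filter fun e => w e = true) ∪ (Finset.univ.filter fun e => w' e = true) := by
    ext e
    simp [Finset.mem_filter, Finset.mem_union, Bool.or_eq_true]
  have hinter : (Finset.univ.filter fun e => (w e && w' e) = true) =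
      (Finset.univ.filter fun e => w e = true) ∩ (Finset.univ.filter fun e => w' e = true) := by
    ext e
    simp [Finset.mem_filter, Finset.mem_inter, Bool.and_eq_true]
  -- weight inequality
  have hwineq : fkWeightBar ends πb q w * fkWeightBar ends πb q w' ≤
      fkWeightBar ends πb q (fun e => w e || w' e) *
        fkWeightBar ends πb q (fun e => w e && w' e) := by
    have e1 : fkWeightBar ends πb q w * fkWeightBar ends πb q w' =
        ((∏ e ∈ Finset.univ.filter fun e => w e = true, πb e) *
          ∏ e ∈ Finset.univ.filter fun e => w' e = true, πb e) *
          q ^ (compCount ends w + compCount ends w') := by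
      simp only [fkWeightBar]
      rw [pow_add]
      ring
    have e2 : fkWeightBar ends πb q (fun e => w e || w' e) *
        fkWeightBar ends πb q (fun e => w e && w' e) =
        ((∏ e ∈ Finset.univ.filter fun e => w e = true, πb e) *
          ∏ e ∈ Finset.univ.filter fun e => w' e = true, πb e) *
          q ^ (compCount ends (fun e => w e || w' e) +
            compCount ends (fun e => w e && w' e)) := by
      simp only [fkWeightBar]
      rw [pow_add, hunion, hinter, ← Finset.prod_union_inter]
      ring
    rw [e1, e2]
    have hP : (0:ℝ) ≤ (∏ e ∈ Finset.univ.filter fun e => w e = true, πb e) *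
        ∏ e ∈ Finset.univ.filter fun e => w' e = true, πb e := by
      apply mul_nonneg <;> exact Finset.prod_nonneg fun e _ => (hπpos e).le
    exact mul_le_mul_of_nonneg_left (pow_le_pow_right₀ hq hkexp) hP
  -- positivity of the partition function
  have hWpos : ∀ u : E → Bool, 0 < fkWeightBar ends πb q u := by
    intro u
    exact mul_pos (Finset.prod_pos fun e _ => hπpos e) (pow_pos hq0 _)
  have hZpos : 0 < fkZBar ends πb q :=
    Finset.sum_pos (fun u _ => hWpos u) ⟨fun _ => false, Finset.mem_univ _⟩
  -- conclude
  simp only [fkPBar, div_mul_div_comm]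
  exact (div_le_div_iff_of_pos_right (mul_pos hZpos hZpos)).mpr hwineq

end
end

section
/- Let q ≥ 1, let G = (V,E) be a finite graph, and let p̄ = (p_e)_{e ∈ E} with each p_e ∈ (0,1). Then the FK-percolation measure P_{p̄,q,G} satisfies the FKG inequality: for any two nondecreasing functions f, g : {0,1}^E → ℝ (nondecreasing with respect to the pointwise partial order on configurations), E_{p̄,q,G}[f·g] ≥ E_{p̄,q,G}[f] · E_{p̄,q,G}[g]. In particular, any two increasing events are positively correlated. -/
open Finset

noncomputable section

section GraphAux

open SimpleGraph

variable {V : Type*}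

lemma reach_sup_edge {G : SimpleGraph V} {u v x y : V}
    (h : (G ⊔ edge u v).Reachable x y) :
    G.Reachable x y ∨ (G.Reachable x u ∧ G.Reachable v y) ∨
      (G.Reachable x v ∧ G.Reachable u y) := by
  rw [reachable_iff_reflTransGen] at h
  induction h with
  | refl => exact Or.inl (Reachable.refl x)
  | @tail b c _ hadj ih =>
    rcases hadj with hG | he
    · rcases ih with h1 | ⟨h1, h2⟩ | ⟨h1, h2⟩
      · exact Or.inl (h1.trans hG.reachable)
      · exact Or.inr (Or.inl ⟨h1, h2.trans hG.reachable⟩)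
      · exact Or.inr (Or.inr ⟨h1, h2.trans hG.reachable⟩)
    · rw [edge_adj] at he
      obtain ⟨⟨rfl, rfl⟩ | ⟨rfl, rfl⟩, hbc⟩ := he
      · rcases ih with h1 | ⟨h1, h2⟩ | ⟨h1, h2⟩
        · exact Or.inr (Or.inl ⟨h1, Reachable.refl _⟩)
        · exact Or.inr (Or.inl ⟨h1, Reachable.refl _⟩)
        · exact Or.inl h1
      · rcases ih with h1 | ⟨h1, h2⟩ | ⟨h1, h2⟩
        · exact Or.inr (Or.inr ⟨h1, Reachable.refl _⟩)
        · exact Or.inl h1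
        · exact Or.inr (Or.inr ⟨h1, Reachable.refl _⟩)

lemma card_cc_sup_edge_of_reach [Finite V] {G : SimpleGraph V} {u v : V}
    (h : G.Reachable u v) :
    Nat.card (G ⊔ edge u v).ConnectedComponent = Nat.card G.ConnectedComponent := by
  symm
  apply Nat.card_eq_of_bijective
    (SimpleGraph.ConnectedComponent.map (Hom.ofLE le_sup_left))
  constructor
  · refine ConnectedComponent.ind₂ ?_
    intro x y hxy
    simp only [ConnectedComponent.map_mk, Hom.ofLE_apply,
      ConnectedComponent.eq] at hxy ⊢
    rcases reach_sup_edge hxy with h1 | ⟨h1, h2⟩ | ⟨h1, h2⟩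
    · exact h1
    · exact (h1.trans h).trans h2
    · exact (h1.trans h.symm).trans h2
  · refine ConnectedComponent.ind ?_
    intro y
    exact ⟨G.connectedComponentMk y, by
      simp [ConnectedComponent.map_mk, Hom.ofLE_apply]⟩

private lemma card_ne_add_one {α : Type*} [Finite α] (a : α) :
    Nat.card {b : α // b ≠ a} + 1 = Nat.card α := by
  classical
  cases nonempty_fintype α
  rw [Nat.card_eq_fintype_card, Nat.card_eq_fintype_card]
  have h1 : Fintype.card {b : α // ¬ b = a} = Fintype.card α - Fintype.card {b : α // b = a} :=
    Fintype.card_subtype_compl _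
  simp only [ne_eq]
  rw [h1, Fintype.card_subtype_eq]
  have : 0 < Fintype.card α := Fintype.card_pos_iff.mpr ⟨a⟩
  omega

lemma card_cc_sup_edge_of_not_reach [Finite V] {G : SimpleGraph V} {u v : V}
    (hne : u ≠ v) (h : ¬ G.Reachable u v) :
    Nat.card (G ⊔ edge u v).ConnectedComponent + 1 = Nat.card G.ConnectedComponent := by
  have hbij : Function.Bijective
      (fun c : {c : G.ConnectedComponent // c ≠ G.connectedComponentMk v} =>
        SimpleGraph.ConnectedComponent.map
          (Hom.ofLE (le_sup_left : G ≤ G ⊔ edge u v)) c.1) := by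
    constructor
    · rintro ⟨c, hc⟩ ⟨d, hd⟩ hcd
      obtain ⟨x, rfl⟩ := c.exists_rep
      obtain ⟨y, rfl⟩ := d.exists_rep
      have hcd' : (G ⊔ edge u v).Reachable x y := ConnectedComponent.exact hcd
      have hc' : ¬ G.Reachable x v := fun hr => hc (ConnectedComponent.sound hr)
      have hd' : ¬ G.Reachable y v := fun hr => hd (ConnectedComponent.sound hr)
      rcases reach_sup_edge hcd' with h1 | ⟨h1, h2⟩ | ⟨h1, h2⟩
      · exact Subtype.ext (ConnectedComponent.sound h1)
      · exact absurd h2.symm hd'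
      · exact absurd h1 hc'
    · refine ConnectedComponent.ind ?_
      intro y
      by_cases hy : G.Reachable y v
      · refine ⟨⟨G.connectedComponentMk u, ?_⟩, ?_⟩
        · rw [ne_eq, ConnectedComponent.eq]; exact h
        · simp only [ConnectedComponent.map_mk, Hom.ofLE_apply]
          rw [ConnectedComponent.eq]
          have huv : (G ⊔ edge u v).Adj u v := by
            rw [sup_adj, edge_adj]; exact Or.inr ⟨Or.inl ⟨rfl, rfl⟩, hne⟩
          exact huv.reachable.trans (hy.symm.mono le_sup_left)
      · refine ⟨⟨G.connectedComponentMk y, ?_⟩, rfl⟩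
        rw [ne_eq, ConnectedComponent.eq]; exact hy
  rw [← Nat.card_eq_of_bijective _ hbij]
  exact card_ne_add_one _

end GraphAux


section SpannedAux

open SimpleGraph

variable {V E : Type*} [Fintype V] [DecidableEq E]

lemma spanned_mono (ends : E → Sym2 V) {w w' : E → Bool}
    (h : ∀ e, w e = true → w' e = true) : spanned ends w ≤ spanned ends w' := by
  apply SimpleGraph.fromEdgeSet_mono
  rintro s ⟨e, he, rfl⟩
  exact ⟨e, h e he, rfl⟩

lemma spanned_update (ends : E → Sym2 V) (w : E → Bool) (e : E) {u v : V}
    (huv : ends e = s(u, v)) :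
    spanned ends (Function.update w e true) = spanned ends w ⊔ edge u v := by
  have hset : {s | ∃ e', (Function.update w e true) e' = true ∧ ends e' = s}
      = {s | ∃ e', w e' = true ∧ ends e' = s} ∪ {s(u, v)} := by
    ext s
    simp only [Set.mem_setOf_eq, Set.mem_union, Set.mem_singleton_iff]
    constructor
    · rintro ⟨e', he', rfl⟩
      rcases eq_or_ne e' e with rfl | hne
      · exact Or.inr huv
      · rw [Function.update_of_ne hne] at he'
        exact Or.inl ⟨e', he', rfl⟩
    · rintro (⟨e', he', rfl⟩ | rfl)
      · refine ⟨e', ?_, rfl⟩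
        rcases eq_or_ne e' e with rfl | hne
        · simp
        · rwa [Function.update_of_ne hne]
      · exact ⟨e, by simp, huv⟩
  show SimpleGraph.fromEdgeSet _ = _
  rw [hset, SimpleGraph.fromEdgeSet_union]
  rfl

lemma compCount_update_of_reach (ends : E → Sym2 V) (w : E → Bool) (e : E) {u v : V}
    (huv : ends e = s(u, v)) (h : (spanned ends w).Reachable u v) :
    compCount ends (Function.update w e true) = compCount ends w := by
  unfold compCount
  rw [spanned_update ends w e huv]
  exact card_cc_sup_edge_of_reach h

lemma compCount_update_of_not_reach (ends : E → Sym2 V) (w : E → Bool) (e : E) {u v : V}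
    (huv : ends e = s(u, v)) (hne : u ≠ v) (h : ¬ (spanned ends w).Reachable u v) :
    compCount ends (Function.update w e true) + 1 = compCount ends w := by
  unfold compCount
  rw [spanned_update ends w e huv]
  exact card_cc_sup_edge_of_not_reach hne h

lemma compCount_supermod [Fintype E] (ends : E → Sym2 V)
    (h_nondiag : ∀ e, ¬ (ends e).IsDiag) (a b : E → Bool) :
    compCount ends a + compCount ends b ≤
      compCount ends (a ⊓ b) + compCount ends (a ⊔ b) := by
  suffices H : ∀ n (a b : E → Bool),
      (Finset.univ.filter fun e => a e = false ∧ b e = true).card = n →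
      compCount ends a + compCount ends b ≤
        compCount ends (a ⊓ b) + compCount ends (a ⊔ b) from H _ a b rfl
  intro n
  induction n with
  | zero =>
    intro a b hcard
    have hle : b ≤ a := by
      intro e
      rw [Finset.card_eq_zero] at hcard
      have := Finset.filter_eq_empty_iff.mp hcard (Finset.mem_univ e)
      rw [Bool.le_iff_imp]
      intro hbe
      cases hae : a e
      · exact absurd ⟨hae, hbe⟩ this
      · rfl
    rw [inf_eq_right.mpr hle, sup_eq_left.mpr hle]
    omega
  | succ n IH =>
    intro a b hcard
    obtain ⟨e, he⟩ := Finset.card_pos.mp (by rw [hcard]; exact n.succ_pos)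
    rw [Finset.mem_filter] at he
    obtain ⟨-, hae, hbe⟩ := he
    set a' := Function.update a e true with ha'
    have hcard' : (Finset.univ.filter fun e' => a' e' = false ∧ b e' = true).card = n := by
      have hst : (Finset.univ.filter fun e' => a' e' = false ∧ b e' = true)
          = (Finset.univ.filter fun e' => a e' = false ∧ b e' = true).erase e := by
        ext e'
        simp only [Finset.mem_filter, Finset.mem_erase, Finset.mem_univ, true_and, ha']
        rcases eq_or_ne e' e with rfl | hne
        · simp
        · simp [Function.update_of_ne hne, hne]
      rw [hst, Finset.card_erase_of_mem (Finset.mem_filter.mpr ⟨Finset.mem_univ e, hae, hbe⟩),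
        hcard]
      omega
    have hIH := IH a' b hcard'
    have hinf : a' ⊓ b = Function.update (a ⊓ b) e true := by
      funext e'
      rcases eq_or_ne e' e with rfl | hne
      · simp [Pi.inf_apply, ha', hbe]
      · simp [Pi.inf_apply, ha', Function.update_of_ne hne]
    have hsup : a' ⊔ b = a ⊔ b := by
      funext e'
      rcases eq_or_ne e' e with rfl | hne
      · simp [Pi.sup_apply, ha', hae, hbe]
      · simp [Pi.sup_apply, ha', Function.update_of_ne hne]
    obtain ⟨⟨u, v⟩, huv0⟩ := Quot.exists_rep (ends e)
    have huv : ends e = s(u, v) := huv0.symm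
    have hneuv : u ≠ v := by
      intro h
      apply h_nondiag e
      rw [huv, h]
      exact Sym2.isDiag_iff_proj_eq.mpr rfl
    rw [hinf, hsup] at hIH
    have hmono : (spanned ends (a ⊓ b)).Reachable u v → (spanned ends a).Reachable u v := by
      refine fun hr => hr.mono (spanned_mono ends fun e' h' => ?_)
      rw [Pi.inf_apply] at h'
      cases hae' : a e'
      · rw [hae'] at h'
        revert h'
        cases b e' <;> decide
      · rfl
    by_cases hra : (spanned ends a).Reachable u v
    · have h1 : compCount ends a' = compCount ends a :=
        compCount_update_of_reach ends a e huv hra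
      by_cases hrab : (spanned ends (a ⊓ b)).Reachable u v
      · have h2 : compCount ends (Function.update (a ⊓ b) e true) = compCount ends (a ⊓ b) :=
          compCount_update_of_reach ends (a ⊓ b) e huv hrab
        omega
      · have h2 : compCount ends (Function.update (a ⊓ b) e true) + 1 = compCount ends (a ⊓ b) :=
          compCount_update_of_not_reach ends (a ⊓ b) e huv hneuv hrab
        omega
    · have hrab : ¬ (spanned ends (a ⊓ b)).Reachable u v := fun hr => hra (hmono hr)
      have h1 : compCount ends a' + 1 = compCount ends a :=
        compCount_update_of_not_reach ends a e huv hneuv hra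
      have h2 : compCount ends (Function.update (a ⊓ b) e true) + 1 = compCount ends (a ⊓ b) :=
        compCount_update_of_not_reach ends (a ⊓ b) e huv hneuv hrab
      omega

end SpannedAux



section WeightAux

variable {V E : Type*} [Fintype V] [Fintype E] [DecidableEq E]

lemma fkWeightBar_pos' (ends : E → Sym2 V) (πb : E → ℝ) (q : ℝ)
    (hπ : ∀ e, 0 < πb e) (hq : 0 < q) (w : E → Bool) : 0 < fkWeightBar ends πb q w :=
  mul_pos (Finset.prod_pos fun e _ => hπ e) (pow_pos hq _)

lemma fkWeightBar_supermod' (ends : E → Sym2 V) (h_nondiag : ∀ e, ¬ (ends e).IsDiag)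
    (πb : E → ℝ) (q : ℝ) (hπ : ∀ e, 0 < πb e) (hq : 1 ≤ q) (a b : E → Bool) :
    fkWeightBar ends πb q a * fkWeightBar ends πb q b ≤
      fkWeightBar ends πb q (a ⊓ b) * fkWeightBar ends πb q (a ⊔ b) := by
  have hprod : ∀ w : E → Bool,
      (∏ e ∈ Finset.univ.filter fun e => w e = true, πb e)
        = ∏ e, (if w e = true then πb e else 1) := fun w => Finset.prod_filter _ _
  have hPP : (∏ e ∈ Finset.univ.filter fun e => a e = true, πb e) *
      (∏ e ∈ Finset.univ.filter fun e => b e = true, πb e)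
      = (∏ e ∈ Finset.univ.filter fun e => (a ⊓ b) e = true, πb e) *
        (∏ e ∈ Finset.univ.filter fun e => (a ⊔ b) e = true, πb e) := by
    rw [hprod, hprod, hprod, hprod, ← Finset.prod_mul_distrib, ← Finset.prod_mul_distrib]
    refine Finset.prod_congr rfl fun e _ => ?_
    cases ha : a e <;> cases hb : b e <;>
      simp [Pi.inf_apply, Pi.sup_apply, ha, hb]
  have hq0 : (0:ℝ) < q := lt_of_lt_of_le one_pos hq
  unfold fkWeightBar
  calc ((∏ e ∈ Finset.univ.filter fun e => a e = true, πb e) * q ^ compCount ends a) *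
        ((∏ e ∈ Finset.univ.filter fun e => b e = true, πb e) * q ^ compCount ends b)
      = ((∏ e ∈ Finset.univ.filter fun e => a e = true, πb e) *
          (∏ e ∈ Finset.univ.filter fun e => b e = true, πb e)) *
          q ^ (compCount ends a + compCount ends b) := by rw [pow_add]; ring
    _ = ((∏ e ∈ Finset.univ.filter fun e => (a ⊓ b) e = true, πb e) *
          (∏ e ∈ Finset.univ.filter fun e => (a ⊔ b) e = true, πb e)) *
          q ^ (compCount ends a + compCount ends b) := by rw [hPP]
    _ ≤ ((∏ e ∈ Finset.univ.filter fun e => (a ⊓ b) e = true, πb e) *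
          (∏ e ∈ Finset.univ.filter fun e => (a ⊔ b) e = true, πb e)) *
          q ^ (compCount ends (a ⊓ b) + compCount ends (a ⊔ b)) := by
        refine mul_le_mul_of_nonneg_left ?_ ?_
        · exact pow_le_pow_right₀ hq (compCount_supermod ends h_nondiag a b)
        · exact mul_nonneg (Finset.prod_pos fun e _ => hπ e).le
            (Finset.prod_pos fun e _ => hπ e).le
    _ = _ := by rw [pow_add]; ring

end WeightAux

/-- the FKG inequality for the FK-percolation measure with `q ≥ 1`:
for nondecreasing `f, g : {0,1}^E → ℝ`, `E[fg] ≥ E[f] E[g]`. -/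
theorem fk_FKG_inequality {V E : Type*} [Fintype V] [Fintype E] [DecidableEq E]
    (ends : E → Sym2 V) (h_inj : Function.Injective ends)
    (h_nondiag : ∀ e, ¬ (ends e).IsDiag)
    (q : ℝ) (hq : 1 ≤ q)
    (pb : E → ℝ) (hpb : ∀ e, pb e ∈ Set.Ioo (0 : ℝ) 1)
    (πb : E → ℝ) (hπb : ∀ e, πb e = pb e / (1 - pb e))
    (f g : (E → Bool) → ℝ)
    (hf : ∀ w w' : E → Bool, (∀ e, w e = true → w' e = true) → f w ≤ f w')
    (hg : ∀ w w' : E → Bool, (∀ e, w e = true → w' e = true) → g w ≤ g w') :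
    (∑ w : E → Bool, f w * fkPBar ends πb q w) * (∑ w : E → Bool, g w * fkPBar ends πb q w) ≤
      ∑ w : E → Bool, f w * g w * fkPBar ends πb q w := by

  classical
  set μ := fkWeightBar ends πb q with hμdef
  have hπpos : ∀ e, 0 < πb e := fun e => by
    rw [hπb e]
    exact div_pos (hpb e).1 (by linarith [(hpb e).2])
  have hqpos : (0:ℝ) < q := lt_of_lt_of_le one_pos hq
  have hμpos : ∀ w, 0 < μ w := fkWeightBar_pos' ends πb q hπpos hqpos
  set Z := fkZBar ends πb q with hZdef
  have hZ : Z = ∑ w : E → Bool, μ w := rfl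
  have hZpos : 0 < Z := by
    rw [hZ]
    exact Finset.sum_pos (fun w _ => hμpos w) Finset.univ_nonempty
  set w₀ : E → Bool := fun _ => false with hw₀
  set c := f w₀ with hc
  set d := g w₀ with hd
  set F : (E → Bool) → ℝ := fun w => f w - c with hF
  set G : (E → Bool) → ℝ := fun w => g w - d with hG
  have hFmono : Monotone F := fun w w' hle => by
    simp only [hF]
    have := hf w w' fun e he => Bool.le_iff_imp.mp (hle e) he
    linarith
  have hGmono : Monotone G := fun w w' hle => by
    simp only [hG]
    have := hg w w' fun e he => Bool.le_iff_imp.mp (hle e) he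
    linarith
  have hF0 : (0:(E → Bool) → ℝ) ≤ F := fun w => by
    simp only [hF, Pi.zero_apply, sub_nonneg, hc]
    exact hf w₀ w fun e he => absurd he (by simp [hw₀])
  have hG0 : (0:(E → Bool) → ℝ) ≤ G := fun w => by
    simp only [hG, Pi.zero_apply, sub_nonneg, hd]
    exact hg w₀ w fun e he => absurd he (by simp [hw₀])
  have hsuper : ∀ a b : E → Bool, μ a * μ b ≤ μ (a ⊓ b) * μ (a ⊔ b) :=
    fkWeightBar_supermod' ends h_nondiag πb q hπpos hq
  have hfkg := fkg F G μ (fun w => (hμpos w).le) hF0 hG0 hFmono hGmono hsuper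
  set A := ∑ w : E → Bool, μ w * f w with hA
  set B := ∑ w : E → Bool, μ w * g w with hB
  set C := ∑ w : E → Bool, μ w * (f w * g w) with hC
  have e1 : ∑ w : E → Bool, μ w * F w = A - c * Z := by
    have h1 : ∀ w : E → Bool, μ w * F w = μ w * f w - c * μ w := fun w => by
      simp only [hF]; ring
    rw [Finset.sum_congr rfl fun w _ => h1 w, Finset.sum_sub_distrib, ← Finset.mul_sum, hA, hZ]
  have e2 : ∑ w : E → Bool, μ w * G w = B - d * Z := by
    have h1 : ∀ w : E → Bool, μ w * G w = μ w * g w - d * μ w := fun w => by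
      simp only [hG]; ring
    rw [Finset.sum_congr rfl fun w _ => h1 w, Finset.sum_sub_distrib, ← Finset.mul_sum, hB, hZ]
  have e3 : ∑ w : E → Bool, μ w * (F w * G w) = C - d * A - c * B + c * d * Z := by
    have h1 : ∀ w : E → Bool, μ w * (F w * G w)
        = μ w * (f w * g w) - d * (μ w * f w) - c * (μ w * g w) + c * d * μ w := fun w => by
      simp only [hF, hG]; ring
    rw [Finset.sum_congr rfl fun w _ => h1 w, Finset.sum_add_distrib, Finset.sum_sub_distrib,
      Finset.sum_sub_distrib, ← Finset.mul_sum, ← Finset.mul_sum, ← Finset.mul_sum, hA, hB, hC,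
      hZ]
  rw [e1, e2, e3, hZ.symm] at hfkg
  have hmain : A * B ≤ Z * C := by nlinarith [hfkg]
  have gl1 : ∑ w : E → Bool, f w * fkPBar ends πb q w = A / Z := by
    rw [hA, Finset.sum_div]
    refine Finset.sum_congr rfl fun w _ => ?_
    simp only [fkPBar, ← hμdef, ← hZdef]
    ring
  have gl2 : ∑ w : E → Bool, g w * fkPBar ends πb q w = B / Z := by
    rw [hB, Finset.sum_div]
    refine Finset.sum_congr rfl fun w _ => ?_
    simp only [fkPBar, ← hμdef, ← hZdef]
    ring
  have gl3 : ∑ w : E → Bool, f w * g w * fkPBar ends πb q w = C / Z := by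
    rw [hC, Finset.sum_div]
    refine Finset.sum_congr rfl fun w _ => ?_
    simp only [fkPBar, ← hμdef, ← hZdef]
    ring
  rw [gl1, gl2, gl3, div_mul_div_comm, div_le_div_iff₀ (by positivity) hZpos]
  nlinarith [hmain, hZpos]


end
end

section
/- Let q ≥ 1 and let W = (V,c) be a finite weighted graph, with associated FK measure P_{W,q} defined via edge parameters p_e = 1 − e^{−c(e)}. Then for each fixed edge e₀, the probability P_{W,q}(w(e₀) = 1) that e₀ is open is a nondecreasing function of the weight function c: if c(e) ≤ c'(e) for all edges e, then P_{(V,c),q}(w(e₀) = 1) ≤ P_{(V,c'),q}(w(e₀) = 1). -/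
open Finset MeasureTheory

noncomputable section

/-- The FK weight of a configuration on the finite weighted graph `(V, c)`:
`q^{k(w)} Π_{e : w(e) = 1} (e^{c(e)} - 1)`.  Configurations are indexed by all
unordered pairs; pairs that are not edges (i.e. with `c = 0`, in particular the
diagonal ones) carry weight `e^0 - 1 = 0` and hence are almost surely closed. -/
def wFkWeight {V : Type*} [Fintype V] [DecidableEq V] (c : Sym2 V → ℝ) (q : ℝ)
    (w : Sym2 V → Bool) : ℝ :=
  q ^ compCount (id : Sym2 V → Sym2 V) w *
    ∏ s ∈ Finset.univ.filter fun s : Sym2 V => w s = true, (Real.exp (c s) - 1)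

/-- The FK partition function of the finite weighted graph `(V, c)`. -/
def wFkZ {V : Type*} [Fintype V] [DecidableEq V] (c : Sym2 V → ℝ) (q : ℝ) : ℝ :=
  ∑ w : Sym2 V → Bool, wFkWeight c q w

/-- The FK probability of a configuration on the finite weighted graph `(V, c)`. -/
def wFkP {V : Type*} [Fintype V] [DecidableEq V] (c : Sym2 V → ℝ) (q : ℝ)
    (w : Sym2 V → Bool) : ℝ :=
  wFkWeight c q w / wFkZ c q

section FKaux
open SimpleGraph
set_option linter.unusedSectionVars false
variable {V : Type*} [Fintype V] [DecidableEq V]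

abbrev Gr (w : Sym2 V → Bool) : SimpleGraph V := spanned (id : Sym2 V → Sym2 V) w

lemma gr_adj (w : Sym2 V → Bool) (u v : V) :
    (Gr w).Adj u v ↔ w s(u, v) = true ∧ u ≠ v := by
  simp [Gr, spanned, SimpleGraph.fromEdgeSet_adj]

lemma gr_mono {w w' : Sym2 V → Bool} (h : w ≤ w') : Gr w ≤ Gr w' := by
  intro u v huv
  rw [gr_adj] at huv ⊢
  exact ⟨le_antisymm (by simp) (huv.1 ▸ h s(u,v)), huv.2⟩

/-- Dichotomy: a walk in the graph with edge s(x,y) added connects things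
either directly or through the new edge. -/
lemma reach_dichot (w : Sym2 V → Bool) (x y : V) {u v : V}
    (p : (Gr (Function.update w s(x,y) true)).Walk u v) :
    (Gr w).Reachable u v ∨
      ((Gr w).Reachable u x ∧ (Gr w).Reachable y v) ∨
      ((Gr w).Reachable u y ∧ (Gr w).Reachable x v) := by
  induction p with
  | nil => exact Or.inl (Reachable.refl _)
  | @cons a b c hab q ih =>
    rw [gr_adj] at hab
    obtain ⟨hw, hne⟩ := hab
    rcases eq_or_ne (s(a, b)) (s(x, y)) with he | he
    · -- step uses the new edge
      rw [Sym2.eq_iff] at he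
      rcases he with ⟨rfl, rfl⟩ | ⟨rfl, rfl⟩
      · rcases ih with h | ⟨h1, h2⟩ | ⟨h1, h2⟩
        · exact Or.inr (Or.inl ⟨Reachable.refl _, h⟩)
        · exact Or.inl (h1.symm.trans h2)
        · exact Or.inl h2
      · rcases ih with h | ⟨h1, h2⟩ | ⟨h1, h2⟩
        · exact Or.inr (Or.inr ⟨Reachable.refl _, h⟩)
        · exact Or.inl h2
        · exact Or.inl (h1.symm.trans h2)
    · -- step is an old edge
      rw [Function.update_of_ne he] at hw
      have hadj : (Gr w).Adj a b := (gr_adj w a b).2 ⟨hw, hne⟩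
      rcases ih with h | ⟨h1, h2⟩ | ⟨h1, h2⟩
      · exact Or.inl (hadj.reachable.trans h)
      · exact Or.inr (Or.inl ⟨hadj.reachable.trans h1, h2⟩)
      · exact Or.inr (Or.inr ⟨hadj.reachable.trans h1, h2⟩)

lemma compCount_update_eq (w : Sym2 V → Bool) (x y : V)
    (hxy : (Gr w).Reachable x y) :
    compCount id (Function.update w s(x,y) true) = compCount id w := by
  have hiff : ∀ u v : V, (Gr (Function.update w s(x,y) true)).Reachable u v ↔
      (Gr w).Reachable u v := by
    intro u v
    constructor
    · rintro ⟨p⟩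
      rcases reach_dichot w x y p with h | ⟨h1, h2⟩ | ⟨h1, h2⟩
      · exact h
      · exact (h1.trans hxy).trans h2
      · exact (h1.trans hxy.symm).trans h2
    · exact fun h => h.mono (gr_mono (fun s => by
        rcases eq_or_ne s (s(x,y)) with rfl | hs
        · simp
        · simp [Function.update_of_ne hs]))
  unfold compCount
  apply Nat.card_congr
  exact Equiv.ofBijective
    (Quot.map id (fun a b h => (hiff a b).1 h))
    ⟨by rintro ⟨a⟩ ⟨b⟩ h
        exact Quot.sound ((hiff a b).2 (SimpleGraph.ConnectedComponent.exact h)),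
      by rintro ⟨a⟩; exact ⟨Quot.mk _ a, rfl⟩⟩

lemma compCount_antitone {w w' : Sym2 V → Bool} (h : w ≤ w') :
    compCount (id : Sym2 V → Sym2 V) w' ≤ compCount id w := by
  unfold compCount
  apply Nat.card_le_card_of_surjective
    (SimpleGraph.ConnectedComponent.map (SimpleGraph.Hom.ofLE (gr_mono h)))
  rintro ⟨a⟩
  exact ⟨Quot.mk _ a, rfl⟩

lemma compCount_update_add_one (w : Sym2 V → Bool) (x y : V)
    (hxy : ¬ (Gr w).Reachable x y) :
    compCount id (Function.update w s(x,y) true) + 1 = compCount id w := by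
  classical
  have hne : x ≠ y := fun h => hxy (h ▸ Reachable.refl x)
  set w' := Function.update w s(x,y) true with hw'
  have hle : w ≤ w' := fun s => by
    rcases eq_or_ne s (s(x,y)) with rfl | hs
    · simp [w']
    · simp [w', Function.update_of_ne hs]
  set φ : (Gr w).ConnectedComponent → (Gr w').ConnectedComponent :=
    SimpleGraph.ConnectedComponent.map (SimpleGraph.Hom.ofLE (gr_mono hle))
      with hφ
  have hφmk : ∀ v : V, φ ((Gr w).connectedComponentMk v) = (Gr w').connectedComponentMk v :=
    fun v => rfl
  set cx := (Gr w).connectedComponentMk x with hcx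
  set cy := (Gr w).connectedComponentMk y with hcy
  have hcxy : cx ≠ cy := fun h => hxy (SimpleGraph.ConnectedComponent.exact h)
  have hadj : (Gr w').Adj x y := (gr_adj w' x y).2 ⟨by simp [w'], hne⟩
  -- the bijection
  have hbij : Function.Bijective (fun z : {z : (Gr w).ConnectedComponent // z ≠ cy} => φ z.1) := by
    constructor
    · rintro ⟨z1, hz1⟩ ⟨z2, hz2⟩ h
      obtain ⟨a, rfl⟩ := z1.exists_rep
      obtain ⟨b, rfl⟩ := z2.exists_rep
      simp only at h
      have hr : (Gr w').Reachable a b := SimpleGraph.ConnectedComponent.exact h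
      obtain ⟨p⟩ := hr
      refine Subtype.ext ?_
      rcases reach_dichot w x y p with h' | ⟨h1, h2⟩ | ⟨h1, h2⟩
      · exact Quot.sound h'
      · exact absurd (Quot.sound h2.symm : _ = cy) hz2
      · exact absurd (Quot.sound h1 : _ = cy) hz1
    · rintro ⟨a⟩
      by_cases ha : (Gr w).connectedComponentMk a = cy
      · refine ⟨⟨cx, hcxy⟩, ?_⟩
        simp only [hcx, hφmk]
        exact Quot.sound (hadj.reachable.trans
          ((SimpleGraph.ConnectedComponent.exact ha).symm.mono (gr_mono hle)))
      · exact ⟨⟨(Gr w).connectedComponentMk a, ha⟩, rfl⟩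
  have hfin : Finite ((Gr w).ConnectedComponent) := Quot.finite _
  have := Fintype.ofFinite ((Gr w).ConnectedComponent)
  have hcard : Nat.card ((Gr w').ConnectedComponent)
      = Nat.card {z : (Gr w).ConnectedComponent // z ≠ cy} :=
    (Nat.card_congr (Equiv.ofBijective _ hbij)).symm
  unfold compCount
  show Nat.card ((Gr w').ConnectedComponent) + 1 = Nat.card ((Gr w).ConnectedComponent)
  rw [hcard]
  rw [Nat.card_eq_fintype_card, Nat.card_eq_fintype_card]
  rw [Fintype.card_subtype_compl (p := fun z => z = cy)]
  rw [Fintype.card_subtype_eq]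
  have h1 : 1 ≤ Fintype.card ((Gr w).ConnectedComponent) :=
    Fintype.card_pos_iff.2 ⟨cy⟩
  omega

lemma compCount_diff (u v : Sym2 V → Bool) (huv : u ≤ v) (e : Sym2 V) :
    compCount (id : Sym2 V → Sym2 V) v + compCount id (Function.update u e true) ≤
      compCount id u + compCount id (Function.update v e true) := by
  induction e using Sym2.inductionOn with
  | hf x y =>
    by_cases hu : (Gr u).Reachable x y
    · rw [compCount_update_eq u x y hu,
        compCount_update_eq v x y (hu.mono (gr_mono huv))]
      omega
    · by_cases hv : (Gr v).Reachable x y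
      · rw [compCount_update_eq v x y hv]
        have := compCount_update_add_one u x y hu
        omega
      · have h1 := compCount_update_add_one u x y hu
        have h2 := compCount_update_add_one v x y hv
        omega

lemma compCount_supermodular (a b : Sym2 V → Bool) :
    compCount (id : Sym2 V → Sym2 V) a + compCount id b ≤
      compCount id (a ⊓ b) + compCount id (a ⊔ b) := by
  classical
  set n := (Finset.univ.filter fun s : Sym2 V => b s = true ∧ a s = false).card with hn
  clear_value n
  induction n generalizing a b with
  | zero =>
    have hba : ∀ s, b s = true → a s = true := by
      intro s hs
      by_contra h
      have : s ∈ Finset.univ.filter fun s : Sym2 V => b s = true ∧ a s = false :=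
        Finset.mem_filter.2 ⟨Finset.mem_univ s, hs, by simpa using h⟩
      rw [Finset.card_eq_zero.1 hn.symm] at this
      exact absurd this (Finset.notMem_empty s)
    have h1 : a ⊓ b = b := by
      funext s; cases hsa : a s <;> cases hsb : b s <;>
        simp_all [Pi.inf_apply]
    have h2 : a ⊔ b = a := by
      funext s; cases hsa : a s <;> cases hsb : b s <;>
        simp_all [Pi.sup_apply]
    rw [h1, h2]; omega
  | succ m ih =>
    obtain ⟨e, he⟩ : ∃ e, e ∈ Finset.univ.filter fun s : Sym2 V => b s = true ∧ a s = false :=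
      Finset.card_pos.1 (by omega)
    rw [Finset.mem_filter] at he
    obtain ⟨-, hbe, hae⟩ := he
    set a' := Function.update a e true with ha'
    have hsup : a' ⊔ b = a ⊔ b := by
      funext s
      rcases eq_or_ne s e with rfl | hs
      · simp [a', Pi.sup_apply, hbe, hae]
      · simp [a', Pi.sup_apply, Function.update_of_ne hs]
    have hinf : a' ⊓ b = Function.update (a ⊓ b) e true := by
      funext s
      rcases eq_or_ne s e with rfl | hs
      · simp [a', Pi.inf_apply, hbe]
      · simp [a', Pi.inf_apply, Function.update_of_ne hs]
    have hcard : (Finset.univ.filter fun s : Sym2 V => b s = true ∧ a' s = false).card = m := by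
      have : (Finset.univ.filter fun s : Sym2 V => b s = true ∧ a' s = false)
          = (Finset.univ.filter fun s : Sym2 V => b s = true ∧ a s = false).erase e := by
        ext s
        rcases eq_or_ne s e with rfl | hs
        · simp [a']
        · simp [a', Function.update_of_ne hs, hs]
      rw [this, Finset.card_erase_of_mem (Finset.mem_filter.2 ⟨Finset.mem_univ e, hbe, hae⟩),
        ← hn]
      omega
    have hIH := ih a' b hcard.symm
    rw [hsup, hinf] at hIH
    have hdiff := compCount_diff (a ⊓ b) a inf_le_left e
    have haa' : compCount (id : Sym2 V → Sym2 V) a' = compCount id (Function.update a e true) := rfl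
    omega

lemma bool_inf_eq : ∀ x y : Bool, (x ⊓ y) = (x && y) := by decide
lemma bool_sup_eq : ∀ x y : Bool, (x ⊔ y) = (x || y) := by decide

lemma edgeProd_holley (c c' : Sym2 V → ℝ) (hc0 : ∀ s, 0 ≤ c s) (hle : ∀ s, c s ≤ c' s)
    (a b : Sym2 V → Bool) :
    (∏ s ∈ Finset.univ.filter fun s : Sym2 V => a s = true, (Real.exp (c s) - 1)) *
      ∏ s ∈ Finset.univ.filter fun s : Sym2 V => b s = true, (Real.exp (c' s) - 1) ≤
    (∏ s ∈ Finset.univ.filter fun s : Sym2 V => (a ⊓ b) s = true, (Real.exp (c s) - 1)) *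
      ∏ s ∈ Finset.univ.filter fun s : Sym2 V => (a ⊔ b) s = true, (Real.exp (c' s) - 1) := by
  classical
  set A := Finset.univ.filter fun s : Sym2 V => a s = true with hA
  set B := Finset.univ.filter fun s : Sym2 V => b s = true with hB
  have hfc : ∀ s : Sym2 V, (0:ℝ) ≤ Real.exp (c s) - 1 := fun s => by
    have := Real.one_le_exp (hc0 s); linarith
  have hfc' : ∀ s : Sym2 V, (0:ℝ) ≤ Real.exp (c' s) - 1 := fun s => by
    have := Real.one_le_exp ((hc0 s).trans (hle s)); linarith
  have hinf : (Finset.univ.filter fun s : Sym2 V => (a ⊓ b) s = true) = A ∩ B := by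
    ext s; simp [hA, hB, Pi.inf_apply, bool_inf_eq, Finset.mem_inter]
  have hsup : (Finset.univ.filter fun s : Sym2 V => (a ⊔ b) s = true) = A ∪ B := by
    ext s; simp [hA, hB, Pi.sup_apply, bool_sup_eq, Finset.mem_union]
  rw [hinf, hsup]
  have hAsplit : ∏ s ∈ A, (Real.exp (c s) - 1)
      = (∏ s ∈ A ∩ B, (Real.exp (c s) - 1)) * ∏ s ∈ A \ B, (Real.exp (c s) - 1) := by
    rw [← Finset.prod_sdiff (Finset.inter_subset_left (s₁ := A) (s₂ := B)),
      Finset.sdiff_inter_self_left, mul_comm]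
  have hUsplit : ∏ s ∈ A ∪ B, (Real.exp (c' s) - 1)
      = (∏ s ∈ A \ B, (Real.exp (c' s) - 1)) * ∏ s ∈ B, (Real.exp (c' s) - 1) := by
    have hd : (A ∪ B) \ B = A \ B := by
      ext x; simp only [Finset.mem_sdiff, Finset.mem_union]; tauto
    rw [← Finset.prod_sdiff (Finset.subset_union_right (s₁ := A) (s₂ := B)), hd]
  rw [hAsplit, hUsplit]
  have key : ∏ s ∈ A \ B, (Real.exp (c s) - 1) ≤ ∏ s ∈ A \ B, (Real.exp (c' s) - 1) :=
    Finset.prod_le_prod (fun s _ => hfc s)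
      (fun s _ => by have := Real.exp_le_exp.2 (hle s); linarith)
  calc (∏ s ∈ A ∩ B, (Real.exp (c s) - 1)) * (∏ s ∈ A \ B, (Real.exp (c s) - 1))
        * ∏ s ∈ B, (Real.exp (c' s) - 1)
      ≤ (∏ s ∈ A ∩ B, (Real.exp (c s) - 1)) * (∏ s ∈ A \ B, (Real.exp (c' s) - 1))
        * ∏ s ∈ B, (Real.exp (c' s) - 1) := by
        apply mul_le_mul_of_nonneg_right _ (Finset.prod_nonneg fun s _ => hfc' s)
        exact mul_le_mul_of_nonneg_left key (Finset.prod_nonneg fun s _ => hfc s)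
    _ = _ := by ring

lemma wFkWeight_nonneg (c : Sym2 V → ℝ) (q : ℝ) (hq : 1 ≤ q) (hc0 : ∀ s, 0 ≤ c s)
    (w : Sym2 V → Bool) : 0 ≤ wFkWeight c q w := by
  apply mul_nonneg (pow_nonneg (by linarith) _)
  exact Finset.prod_nonneg fun s _ => by have := Real.one_le_exp (hc0 s); linarith

lemma wFkWeight_holley (c c' : Sym2 V → ℝ) (q : ℝ) (hq : 1 ≤ q)
    (hc0 : ∀ s, 0 ≤ c s) (hle : ∀ s, c s ≤ c' s) (a b : Sym2 V → Bool) :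
    wFkWeight c q a * wFkWeight c' q b ≤
      wFkWeight c q (a ⊓ b) * wFkWeight c' q (a ⊔ b) := by
  unfold wFkWeight
  have hq0 : (0:ℝ) ≤ q := by linarith
  have hpow : q ^ compCount (id : Sym2 V → Sym2 V) a * q ^ compCount id b ≤
      q ^ compCount id (a ⊓ b) * q ^ compCount id (a ⊔ b) := by
    rw [← pow_add, ← pow_add]
    exact pow_le_pow_right₀ hq (compCount_supermodular a b)
  have hprod := edgeProd_holley c c' hc0 hle a b
  have h1 : (0:ℝ) ≤ (∏ s ∈ Finset.univ.filter fun s : Sym2 V => a s = true,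
      (Real.exp (c s) - 1)) * ∏ s ∈ Finset.univ.filter fun s : Sym2 V => b s = true,
      (Real.exp (c' s) - 1) := by
    apply mul_nonneg <;>
      exact Finset.prod_nonneg fun s _ => by
        have h := Real.one_le_exp (hc0 s)
        have h' := Real.one_le_exp ((hc0 s).trans (hle s))
        first | linarith | linarith
  calc q ^ compCount (id : Sym2 V → Sym2 V) a *
        (∏ s ∈ Finset.univ.filter fun s : Sym2 V => a s = true, (Real.exp (c s) - 1)) *
        (q ^ compCount id b *
          ∏ s ∈ Finset.univ.filter fun s : Sym2 V => b s = true, (Real.exp (c' s) - 1))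
      = (q ^ compCount (id : Sym2 V → Sym2 V) a * q ^ compCount id b) *
        ((∏ s ∈ Finset.univ.filter fun s : Sym2 V => a s = true, (Real.exp (c s) - 1)) *
          ∏ s ∈ Finset.univ.filter fun s : Sym2 V => b s = true, (Real.exp (c' s) - 1)) := by
        ring
    _ ≤ (q ^ compCount (id : Sym2 V → Sym2 V) (a ⊓ b) * q ^ compCount id (a ⊔ b)) *
        ((∏ s ∈ Finset.univ.filter fun s : Sym2 V => (a ⊓ b) s = true, (Real.exp (c s) - 1)) *
          ∏ s ∈ Finset.univ.filter fun s : Sym2 V => (a ⊔ b) s = true, (Real.exp (c' s) - 1)) :=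
        mul_le_mul hpow hprod h1 (mul_nonneg (pow_nonneg hq0 _) (pow_nonneg hq0 _))
    _ = _ := by ring

end FKaux

/-- for `q ≥ 1`, the probability that a given edge `e₀` is open for
the FK measure of a finite weighted graph is nondecreasing in the weight
function `c`. -/
theorem wfk_edge_prob_monotone_in_weights {V : Type*} [Fintype V] [DecidableEq V]
    (q : ℝ) (hq : 1 ≤ q)
    (c c' : Sym2 V → ℝ)
    (hc0 : ∀ s, 0 ≤ c s) (hcdiag : ∀ s : Sym2 V, s.IsDiag → c s = 0)
    (hc0' : ∀ s, 0 ≤ c' s) (hcdiag' : ∀ s : Sym2 V, s.IsDiag → c' s = 0)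
    (hle : ∀ s, c s ≤ c' s)
    (e₀ : Sym2 V) (he₀ : 0 < c e₀) :
    (∑ w : Sym2 V → Bool, if w e₀ = true then wFkP c q w else 0) ≤
      ∑ w : Sym2 V → Bool, if w e₀ = true then wFkP c' q w else 0 := by
  classical
  have hq0 : (0:ℝ) < q := lt_of_lt_of_le one_pos hq
  have hZpos : ∀ d : Sym2 V → ℝ, (∀ s, 0 ≤ d s) → 0 < wFkZ d q := by
    intro d hd
    apply Finset.sum_pos' (fun w _ => wFkWeight_nonneg d q hq hd w)
    refine ⟨fun _ => false, Finset.mem_univ _, ?_⟩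
    unfold wFkWeight
    have hfil : (Finset.univ.filter fun s : Sym2 V => (fun _ => false) s = true) = ∅ := by
      simp
    rw [hfil, Finset.prod_empty, mul_one]
    exact pow_pos hq0 _
  have hZ := hZpos c hc0
  have hZ' := hZpos c' (fun s => (hc0 s).trans (hle s))
  have hsum : ∀ d : Sym2 V → ℝ, 0 < wFkZ d q → ∑ w : Sym2 V → Bool, wFkP d q w = 1 := by
    intro d hd
    unfold wFkP
    rw [← Finset.sum_div]
    exact div_self (ne_of_gt hd)
  have key := holley (μ := fun w : Sym2 V → Bool => if w e₀ = true then (1:ℝ) else 0)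
    (f := wFkP c q) (g := wFkP c' q)
    (fun w => by dsimp; split <;> norm_num)
    (fun w => div_nonneg (wFkWeight_nonneg c q hq hc0 w) hZ.le)
    (fun w => div_nonneg (wFkWeight_nonneg c' q hq (fun s => (hc0 s).trans (hle s)) w) hZ'.le)
    (by
      intro a b hab
      have h2 : a e₀ = true → b e₀ = true := by
        intro hh
        have h := hab e₀
        rw [hh] at h
        cases hbe : b e₀
        · rw [hbe] at h; exact (le_antisymm h (Bool.false_le true)).symm
        · rfl
      dsimp only
      by_cases hae : a e₀ = true
      · rw [if_pos hae, if_pos (h2 hae)]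
      · rw [if_neg hae]
        split <;> norm_num)
    (by rw [hsum c hZ, hsum c' hZ'])
    (by
      intro a b
      unfold wFkP
      rw [div_mul_div_comm, div_mul_div_comm]
      apply div_le_div_of_nonneg_right _ (mul_pos hZ hZ').le
      exact wFkWeight_holley c c' q hq hc0 hle a b)
  calc (∑ w : Sym2 V → Bool, if w e₀ = true then wFkP c q w else 0)
      = ∑ w : Sym2 V → Bool,
          (if w e₀ = true then (1:ℝ) else 0) * wFkP c q w := by
        refine Finset.sum_congr rfl fun w _ => ?_
        split <;> simp
    _ ≤ ∑ w : Sym2 V → Bool,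
          (if w e₀ = true then (1:ℝ) else 0) * wFkP c' q w := key
    _ = _ := by
        refine Finset.sum_congr rfl fun w _ => ?_
        split <;> simp

end
end

section
/- Let q > 0, let W = (V,c) be a finite weighted graph with FK measure P_{W,q}, and consider the dynamical coupling w_t(e) = w(e)·1_{ξ(e) ≤ t}. Fix s ≥ 0, ε > 0, a configuration v with P(w_s = v) > 0, and an edge e with v(e) = 0. Then P(w_{s+ε}(e) = 1 | w_s = v) = (1 − e^{−ε}) · P(w(e) = 1 | w_s = v). In particular, as ε → 0, the edge e opens during (s, s+ε] at rate equal to the conditional probability, given w_s = v, that e is open in w. -/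
open Finset MeasureTheory

noncomputable section

/-- The FK measure of the finite weighted graph `(V, c)`, as a measure on the
space of configurations. -/
def wFkMeasure {V : Type*} [Fintype V] [DecidableEq V] (c : Sym2 V → ℝ) (q : ℝ) :
    Measure (Sym2 V → Bool) :=
  ∑ w : Sym2 V → Bool, ENNReal.ofReal (wFkP c q w) • Measure.dirac w

/-- The dynamical coupling measure: the configuration `w` is FK-distributed and
the clocks `ξ(e)` are i.i.d. mean-one exponential random variables, independent
of `w`. -/
def couplingMeasure {V : Type*} [Fintype V] [DecidableEq V] (c : Sym2 V → ℝ) (q : ℝ) :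
    Measure ((Sym2 V → Bool) × (Sym2 V → ℝ)) :=
  (wFkMeasure c q).prod (Measure.pi fun _ : Sym2 V => ProbabilityTheory.expMeasure 1)

/-- The configuration at time `t` of the dynamical coupling:
`w_t(e) = w(e) · 1_{ξ(e) ≤ t}`. -/
def dyn {V : Type*} (t : ℝ) (x : (Sym2 V → Bool) × (Sym2 V → ℝ)) : Sym2 V → Bool :=
  fun e => x.1 e && decide (x.2 e ≤ t)

namespace CouplingAux

open ProbabilityTheory MeasureTheory Finset
open scoped ENNReal

lemma expM_Iic {x : ℝ} (hx : 0 ≤ x) :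
    expMeasure 1 (Set.Iic x) = ENNReal.ofReal (1 - Real.exp (-x)) := by
  have hP : IsProbabilityMeasure (expMeasure 1) := isProbabilityMeasure_expMeasure one_pos
  have h1 : (expMeasure 1 (Set.Iic x)).toReal = 1 - Real.exp (-x) := by
    have := cdf_expMeasure_eq (r := 1) one_pos x
    rw [cdf_eq_real, measureReal_def] at this
    simpa [hx] using this
  rw [← h1, ENNReal.ofReal_toReal (measure_ne_top _ _)]

lemma one_sub_exp_neg_nonneg {x : ℝ} (hx : 0 ≤ x) : 0 ≤ 1 - Real.exp (-x) := by
  have : Real.exp (-x) ≤ 1 := Real.exp_le_one_iff.2 (by linarith)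
  linarith

lemma expM_Ioi {x : ℝ} (hx : 0 ≤ x) :
    expMeasure 1 (Set.Ioi x) = ENNReal.ofReal (Real.exp (-x)) := by
  have hP : IsProbabilityMeasure (expMeasure 1) := isProbabilityMeasure_expMeasure one_pos
  have h1 : expMeasure 1 (Set.Ioi x) = 1 - expMeasure 1 (Set.Iic x) := by
    rw [← Set.compl_Iic, prob_compl_eq_one_sub measurableSet_Iic]
  rw [h1, expM_Iic hx, ← ENNReal.ofReal_one,
    ← ENNReal.ofReal_sub _ (one_sub_exp_neg_nonneg hx)]
  norm_num

lemma expM_Ioc {x y : ℝ} (hx : 0 ≤ x) (hxy : x ≤ y) :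
    expMeasure 1 (Set.Ioc x y) = ENNReal.ofReal (Real.exp (-x) - Real.exp (-y)) := by
  have hP : IsProbabilityMeasure (expMeasure 1) := isProbabilityMeasure_expMeasure one_pos
  have h1 : Set.Ioc x y = Set.Ioi x \ Set.Ioi y := (Set.Ioi_diff_Ioi).symm
  rw [h1, measure_diff (Set.Ioi_subset_Ioi hxy) measurableSet_Ioi.nullMeasurableSet
      (measure_ne_top _ _), expM_Ioi hx, expM_Ioi (le_trans hx hxy),
    ← ENNReal.ofReal_sub _ (Real.exp_nonneg _)]

variable {V : Type*} [Fintype V] [DecidableEq V]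

lemma meas_cell (e' : Sym2 V) (t : ℝ) (b : Bool) :
    MeasurableSet {x : (Sym2 V → Bool) × (Sym2 V → ℝ) | (x.1 e' && decide (x.2 e' ≤ t)) = b} := by
  have hm1 : Measurable fun x : (Sym2 V → Bool) × (Sym2 V → ℝ) => x.1 e' :=
    (measurable_pi_apply e').comp measurable_fst
  have hm2 : Measurable fun x : (Sym2 V → Bool) × (Sym2 V → ℝ) => x.2 e' :=
    (measurable_pi_apply e').comp measurable_snd
  have h1 : MeasurableSet {x : (Sym2 V → Bool) × (Sym2 V → ℝ) | x.1 e' = true} :=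
    hm1 (MeasurableSet.singleton true)
  have h2 : MeasurableSet {x : (Sym2 V → Bool) × (Sym2 V → ℝ) | x.2 e' ≤ t} :=
    measurableSet_le hm2 measurable_const
  have htrue : {x : (Sym2 V → Bool) × (Sym2 V → ℝ) | (x.1 e' && decide (x.2 e' ≤ t)) = true} =
      {x | x.1 e' = true} ∩ {x | x.2 e' ≤ t} := by
    ext x; simp [Bool.and_eq_true]
  cases b with
  | true => rw [htrue]; exact h1.inter h2
  | false =>
    have : {x : (Sym2 V → Bool) × (Sym2 V → ℝ) | (x.1 e' && decide (x.2 e' ≤ t)) = false} =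
        ({x : (Sym2 V → Bool) × (Sym2 V → ℝ) | (x.1 e' && decide (x.2 e' ≤ t)) = true})ᶜ := by
      ext x; simp
    rw [this, htrue]; exact (h1.inter h2).compl

lemma meas_dyn_eq (t : ℝ) (v : Sym2 V → Bool) :
    MeasurableSet {x : (Sym2 V → Bool) × (Sym2 V → ℝ) | dyn t x = v} := by
  have : {x : (Sym2 V → Bool) × (Sym2 V → ℝ) | dyn t x = v} =
      ⋂ e', {x : (Sym2 V → Bool) × (Sym2 V → ℝ) | (x.1 e' && decide (x.2 e' ≤ t)) = v e'} := by
    ext x; simp [dyn, funext_iff]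
  rw [this]
  exact MeasurableSet.iInter fun e' => meas_cell e' t (v e')

/-- The common factor in the slice computation. -/
def sliceK (c : Sym2 V → ℝ) (q s : ℝ) (v : Sym2 V → Bool) (e : Sym2 V) : ℝ≥0∞ :=
  ∑ w : Sym2 V → Bool, ENNReal.ofReal (wFkP c q w) *
    (if w e = true then
      ∏ e' ∈ Finset.univ.erase e,
        expMeasure 1 {r : ℝ | (w e' && decide (r ≤ s)) = v e'}
     else 0)

lemma coupling_slice (c : Sym2 V → ℝ) (q s : ℝ) (v : Sym2 V → Bool) (e : Sym2 V)
    (hve : v e = false) (I : Set ℝ) (hI : MeasurableSet I) (hIs : I ⊆ Set.Ioi s) :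
    couplingMeasure c q
        ({x | dyn s x = v} ∩ {x | x.1 e = true ∧ x.2 e ∈ I}) =
      expMeasure 1 I * sliceK c q s v e := by
  have hP : IsProbabilityMeasure (expMeasure 1) := isProbabilityMeasure_expMeasure one_pos
  set S : Set ((Sym2 V → Bool) × (Sym2 V → ℝ)) :=
    {x | dyn s x = v} ∩ {x | x.1 e = true ∧ x.2 e ∈ I} with hS
  have hm1 : Measurable fun x : (Sym2 V → Bool) × (Sym2 V → ℝ) => x.1 e :=
    (measurable_pi_apply e).comp measurable_fst
  have hm2 : Measurable fun x : (Sym2 V → Bool) × (Sym2 V → ℝ) => x.2 e :=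
    (measurable_pi_apply e).comp measurable_snd
  have hmI : MeasurableSet {x : (Sym2 V → Bool) × (Sym2 V → ℝ) | x.1 e = true ∧ x.2 e ∈ I} :=
    (hm1 (MeasurableSet.singleton true)).inter (hm2 hI)
  have hmS : MeasurableSet S := (meas_dyn_eq s v).inter hmI
  -- slice at each w
  have hslice : ∀ w : Sym2 V → Bool,
      (Measure.pi fun _ : Sym2 V => expMeasure 1) (Prod.mk w ⁻¹' S) =
        (if w e = true then
          expMeasure 1 I * ∏ e' ∈ Finset.univ.erase e,
            expMeasure 1 {r : ℝ | (w e' && decide (r ≤ s)) = v e'}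
         else 0) := by
    intro w
    by_cases hwe : w e = true
    · rw [if_pos hwe]
      have hset : Prod.mk w ⁻¹' S =
          Set.univ.pi (fun e' => if e' = e then I
            else {r : ℝ | (w e' && decide (r ≤ s)) = v e'}) := by
        ext ξ
        simp only [hS, Set.mem_preimage, Set.mem_inter_iff, Set.mem_setOf_eq, Set.mem_pi,
          Set.mem_univ, true_implies, funext_iff, dyn]
        constructor
        · rintro ⟨hall, -, hξI⟩ e'
          by_cases he' : e' = e
          · subst he'; simp [hξI]
          · simpa [he'] using hall e'
        · intro h
          have hξI : ξ e ∈ I := by simpa using h e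
          refine ⟨fun e' => ?_, hwe, hξI⟩
          by_cases he' : e' = e
          · subst he'
            have : ¬ ξ e' ≤ s := not_le.2 (hIs hξI)
            simp [hwe, this, hve]
          · simpa [he'] using h e'
      rw [hset, Measure.pi_pi]
      rw [← Finset.mul_prod_erase Finset.univ _ (Finset.mem_univ e), if_pos rfl]
      congr 1
      exact Finset.prod_congr rfl fun e' he' => by
        rw [if_neg (Finset.ne_of_mem_erase he')]
    · rw [if_neg hwe]
      have hset : Prod.mk w ⁻¹' S = ∅ := by
        ext ξ
        simp only [hS, Set.mem_preimage, Set.mem_inter_iff, Set.mem_setOf_eq,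
          Set.mem_empty_iff_false, iff_false]
        rintro ⟨-, h1, -⟩
        exact hwe h1
      rw [hset, measure_empty]
  -- compute
  have hprod : couplingMeasure c q S =
      ∫⁻ w, (Measure.pi fun _ : Sym2 V => expMeasure 1) (Prod.mk w ⁻¹' S) ∂(wFkMeasure c q) :=
    Measure.prod_apply hmS
  rw [hprod]
  simp only [wFkMeasure]
  rw [lintegral_finset_sum_measure]
  simp_rw [lintegral_smul_measure, lintegral_dirac, hslice]
  rw [sliceK, Finset.mul_sum]
  refine Finset.sum_congr rfl fun w _ => ?_
  by_cases hwe : w e = true <;> simp [hwe, mul_comm, mul_left_comm]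

end CouplingAux

/-- for an edge `e` that is closed at time `s` (i.e. `v(e) = 0`),
the conditional probability given `w_s = v` that `e` is open at time `s + ε`
equals `(1 - e^{-ε})` times the conditional probability that `e` is open in `w`;
that is, `e` opens at rate equal to the conditional probability that it is open
in the final configuration. -/
theorem coupling_opening_rate {V : Type*} [Fintype V] [DecidableEq V]
    (c : Sym2 V → ℝ) (hc0 : ∀ s, 0 ≤ c s) (hcdiag : ∀ s : Sym2 V, s.IsDiag → c s = 0)
    (q : ℝ) (hq : 0 < q) (s ε : ℝ) (hs : 0 ≤ s) (hε : 0 < ε)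
    (v : Sym2 V → Bool)
    (hv : 0 < couplingMeasure c q {x | dyn s x = v})
    (e : Sym2 V) (hce : 0 < c e) (hve : v e = false) :
    (ProbabilityTheory.cond (couplingMeasure c q) {x | dyn s x = v}
        {x | dyn (s + ε) x e = true}).toReal =
      (1 - Real.exp (-ε)) *
        (ProbabilityTheory.cond (couplingMeasure c q) {x | dyn s x = v}
          {x | x.1 e = true}).toReal := by
  classical
  have hmA : MeasurableSet {x : (Sym2 V → Bool) × (Sym2 V → ℝ) | dyn s x = v} :=
    CouplingAux.meas_dyn_eq s v
  have hB : {x : (Sym2 V → Bool) × (Sym2 V → ℝ) | dyn s x = v} ∩ {x | dyn (s + ε) x e = true} =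
      {x : (Sym2 V → Bool) × (Sym2 V → ℝ) | dyn s x = v} ∩
        {x | x.1 e = true ∧ x.2 e ∈ Set.Ioc s (s + ε)} := by
    ext x
    simp only [Set.mem_inter_iff, Set.mem_setOf_eq, Set.mem_Ioc]
    constructor
    · rintro ⟨hAx, hBx⟩
      have h1 : x.1 e = true ∧ x.2 e ≤ s + ε := by
        simpa [dyn, Bool.and_eq_true] using hBx
      have h0 : (x.1 e && decide (x.2 e ≤ s)) = false := by
        have := congrFun hAx e
        simpa [dyn, hve] using this
      rw [h1.1] at h0
      have hgt : s < x.2 e := by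
        by_contra hle
        simp [not_lt.1 hle] at h0
      exact ⟨hAx, h1.1, hgt, h1.2⟩
    · rintro ⟨hAx, hx1, hgt, hle⟩
      exact ⟨hAx, by simp [dyn, hx1, hle]⟩
  have hC : {x : (Sym2 V → Bool) × (Sym2 V → ℝ) | dyn s x = v} ∩ {x | x.1 e = true} =
      {x : (Sym2 V → Bool) × (Sym2 V → ℝ) | dyn s x = v} ∩
        {x | x.1 e = true ∧ x.2 e ∈ Set.Ioi s} := by
    ext x
    simp only [Set.mem_inter_iff, Set.mem_setOf_eq, Set.mem_Ioi]
    constructor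
    · rintro ⟨hAx, hx1⟩
      have h0 : (x.1 e && decide (x.2 e ≤ s)) = false := by
        have := congrFun hAx e
        simpa [dyn, hve] using this
      rw [hx1] at h0
      have hgt : s < x.2 e := by
        by_contra hle
        simp [not_lt.1 hle] at h0
      exact ⟨hAx, hx1, hgt⟩
    · rintro ⟨hAx, hx1, -⟩
      exact ⟨hAx, hx1⟩
  have hMB := CouplingAux.coupling_slice c q s v e hve (Set.Ioc s (s + ε))
    measurableSet_Ioc Set.Ioc_subset_Ioi_self
  have hMC := CouplingAux.coupling_slice c q s v e hve (Set.Ioi s)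
    measurableSet_Ioi (subset_refl _)
  have hIocIoi : ProbabilityTheory.expMeasure 1 (Set.Ioc s (s + ε)) =
      ENNReal.ofReal (1 - Real.exp (-ε)) * ProbabilityTheory.expMeasure 1 (Set.Ioi s) := by
    rw [CouplingAux.expM_Ioc hs (by linarith), CouplingAux.expM_Ioi hs,
      ← ENNReal.ofReal_mul (CouplingAux.one_sub_exp_neg_nonneg hε.le)]
    congr 1
    rw [sub_mul, one_mul, ← Real.exp_add]
    ring_nf
  rw [ProbabilityTheory.cond_apply hmA, ProbabilityTheory.cond_apply hmA, hB, hC, hMB, hMC,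
    hIocIoi]
  rw [mul_assoc, mul_left_comm, ENNReal.toReal_mul,
    ENNReal.toReal_ofReal (CouplingAux.one_sub_exp_neg_nonneg hε.le)]


end
end

section
/- Let q > 0, let W = (V,c) be a finite weighted graph with FK measure P_{W,q}, and consider the dynamical coupling w_t(e) = w(e)·1_{ξ(e) ≤ t}. Fix 0 ≤ s ≤ t and configurations v ≤ u ≤ ω with P(w_s = v) > 0. Then P(w_t = u, w = ω | w_s = v) = P(w = ω | w_s = v) · (1 − e^{−(t−s)})^{o(u)−o(v)} · (e^{−(t−s)})^{o(ω)−o(u)}, where o(·) denotes the number of open edges. Consequently the process t ↦ w_t is a Markov process: conditionally on w_s = v, the pair (w_t, w) is distributed as a thinning pair built from the conditional law of w given w_s = v. -/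
open Finset MeasureTheory

noncomputable section

/-! Auxiliary lemmas. -/

section Aux

open ProbabilityTheory Real Set

lemma myExp_Iic {x : ℝ} (hx : 0 ≤ x) :
    expMeasure 1 (Set.Iic x) = ENNReal.ofReal (1 - Real.exp (-x)) := by
  rw [expMeasure, gammaMeasure, withDensity_apply _ measurableSet_Iic]
  have h : gammaPDF 1 1 = exponentialPDF 1 := rfl
  rw [h, lintegral_exponentialPDF_eq_antiDeriv one_pos, if_pos hx, one_mul]

lemma myExp_Ioi {x : ℝ} (hx : 0 ≤ x) :
    expMeasure 1 (Set.Ioi x) = ENNReal.ofReal (Real.exp (-x)) := by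
  have hP : IsProbabilityMeasure (expMeasure 1) := isProbabilityMeasure_expMeasure one_pos
  have h := measure_compl (μ := expMeasure 1) (measurableSet_Iic (a := x)) (measure_ne_top _ _)
  rw [Set.compl_Iic] at h
  rw [h, measure_univ, myExp_Iic hx, ← ENNReal.ofReal_one,
    ← ENNReal.ofReal_sub _ (by simp [sub_nonneg, Real.exp_le_one_iff]; linarith)]
  norm_num

lemma myExp_Ioc {x y : ℝ} (hx : 0 ≤ x) (hxy : x ≤ y) :
    expMeasure 1 (Set.Ioc x y) = ENNReal.ofReal (Real.exp (-x) - Real.exp (-y)) := by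
  have hP : IsProbabilityMeasure (expMeasure 1) := isProbabilityMeasure_expMeasure one_pos
  have h : Set.Ioc x y = Set.Iic y \ Set.Iic x := (Set.Iic_sdiff_Iic).symm
  rw [h, measure_diff (Set.Iic_subset_Iic.2 hxy) measurableSet_Iic.nullMeasurableSet
    (measure_ne_top _ _), myExp_Iic (hx.trans hxy), myExp_Iic hx,
    ← ENNReal.ofReal_sub _ (by simp [sub_nonneg, Real.exp_le_one_iff]; linarith)]
  ring_nf

lemma myMeasurable_decide (t : ℝ) : Measurable fun r : ℝ => (decide (r ≤ t) : Bool) := by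
  apply measurable_to_countable'
  intro y
  cases y
  · have h : (fun r : ℝ => (decide (r ≤ t) : Bool)) ⁻¹' {false} = Set.Ioi t := by
      ext r; simp [not_le]
    rw [h]; exact measurableSet_Ioi
  · have h : (fun r : ℝ => (decide (r ≤ t) : Bool)) ⁻¹' {true} = Set.Iic t := by
      ext r; simp
    rw [h]; exact measurableSet_Iic

lemma measurable_dyn {V : Type*} [Fintype V] [DecidableEq V] (t : ℝ) :
    Measurable (dyn (V := V) t) := by
  apply measurable_pi_lambda
  intro e
  have h1 : Measurable fun x : (Sym2 V → Bool) × (Sym2 V → ℝ) => x.1 e :=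
    (measurable_pi_apply e).comp measurable_fst
  have h2 : Measurable fun x : (Sym2 V → Bool) × (Sym2 V → ℝ) =>
      (decide (x.2 e ≤ t) : Bool) :=
    (myMeasurable_decide t).comp ((measurable_pi_apply e).comp measurable_snd)
  exact (measurable_of_countable fun p : Bool × Bool => p.1 && p.2).comp (h1.prodMk h2)

lemma edge_iff1 {s t : ℝ} (hst : s ≤ t) (bv bu be : Bool)
    (hvu : bv = true → bu = true) (huo : bu = true → be = true) (r : ℝ) :
    ((be && decide (r ≤ s)) = bv ∧ (be && decide (r ≤ t)) = bu) ↔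
      r ∈ (if bv = true then Set.Iic s else if bu = true then Set.Ioc s t
        else if be = true then Set.Ioi t else Set.univ) := by
  cases bv <;> cases bu <;> cases be <;>
    simp_all [not_le, Set.mem_Ioc, Set.mem_Ioi, Set.mem_Iic]
  · exact fun h => lt_of_le_of_lt hst h
  · exact fun h => h.trans hst

lemma edge_iff2 {s : ℝ} (bv be : Bool) (hvo : bv = true → be = true) (r : ℝ) :
    ((be && decide (r ≤ s)) = bv) ↔
      r ∈ (if bv = true then Set.Iic s else if be = true then Set.Ioi s
        else if be = true then Set.Ioi s else Set.univ) := by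
  cases bv <;> cases be <;> simp_all [not_le]

lemma openCount_mono {E : Type*} [Fintype E] {v u : E → Bool}
    (h : ∀ e, v e = true → u e = true) : openCount v ≤ openCount u := by
  apply Finset.card_le_card
  intro e he
  simp only [Finset.mem_filter, Finset.mem_univ, true_and] at *
  exact h e he

lemma prod_split {E : Type*} [Fintype E] [DecidableEq E] (v u ω : E → Bool)
    (hvu : ∀ e, v e = true → u e = true) (huo : ∀ e, u e = true → ω e = true)
    (p1 p2 p3 : ℝ) :
    (∏ e : E, (if v e = true then p1 else if u e = true then p2
        else if ω e = true then p3 else 1))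
      = p1 ^ openCount v * p2 ^ (openCount u - openCount v)
        * p3 ^ (openCount ω - openCount u) := by
  classical
  set f : E → ℝ := fun e => if v e = true then p1 else if u e = true then p2
      else if ω e = true then p3 else 1 with hf
  set Fv := Finset.univ.filter fun e => v e = true with hFv
  set Fu := Finset.univ.filter fun e => u e = true with hFu
  set Fo := Finset.univ.filter fun e => ω e = true with hFo
  have hvu' : Fv ⊆ Fu := fun e he => by
    simp only [hFv, hFu, Finset.mem_filter, Finset.mem_univ, true_and] at *
    exact hvu e he
  have huo' : Fu ⊆ Fo := fun e he => by
    simp only [hFu, hFo, Finset.mem_filter, Finset.mem_univ, true_and] at *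
    exact huo e he
  have h0 : ∏ e : E, f e = (∏ e ∈ Finset.univ \ Fo, f e) * ∏ e ∈ Fo, f e :=
    (Finset.prod_sdiff (Finset.subset_univ Fo)).symm
  have h1 : ∏ e ∈ Finset.univ \ Fo, f e = 1 := by
    apply Finset.prod_eq_one
    intro e he
    simp only [Finset.mem_sdiff, hFo, Finset.mem_filter, Finset.mem_univ, true_and] at he
    have ho : ω e = false := by simpa using he
    have hu : u e = false := by
      cases h : u e
      · rfl
      · exact absurd (huo e h) (by simp [ho])
    have hv : v e = false := by
      cases h : v e
      · rfl
      · exact absurd (hvu e h) (by simp [hu])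
    simp [hf, hv, hu, ho]
  have h2 : ∏ e ∈ Fo, f e = (∏ e ∈ Fo \ Fu, f e) * ∏ e ∈ Fu, f e :=
    (Finset.prod_sdiff huo').symm
  have h3 : ∏ e ∈ Fo \ Fu, f e = p3 ^ (openCount ω - openCount u) := by
    rw [Finset.prod_congr rfl (fun e he => ?_), Finset.prod_const,
      Finset.card_sdiff_of_subset huo']
    · rfl
    · simp only [Finset.mem_sdiff, hFo, hFu, Finset.mem_filter, Finset.mem_univ,
        true_and] at he
      have hu : u e = false := by simpa using he.2
      have hv : v e = false := by
        cases h : v e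
        · rfl
        · exact absurd (hvu e h) (by simp [hu])
      simp [hf, hv, hu, he.1]
  have h4 : ∏ e ∈ Fu, f e = (∏ e ∈ Fu \ Fv, f e) * ∏ e ∈ Fv, f e :=
    (Finset.prod_sdiff hvu').symm
  have h5 : ∏ e ∈ Fu \ Fv, f e = p2 ^ (openCount u - openCount v) := by
    rw [Finset.prod_congr rfl (fun e he => ?_), Finset.prod_const,
      Finset.card_sdiff_of_subset hvu']
    · rfl
    · simp only [Finset.mem_sdiff, hFv, hFu, Finset.mem_filter, Finset.mem_univ,
        true_and] at he
      have hv : v e = false := by simpa using he.2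
      simp [hf, hv, he.1]
  have h6 : ∏ e ∈ Fv, f e = p1 ^ openCount v := by
    rw [Finset.prod_congr rfl (fun e he => ?_), Finset.prod_const]
    · rfl
    · simp only [hFv, Finset.mem_filter, Finset.mem_univ, true_and] at he
      simp [hf, he]
  rw [h0, h1, h2, h3, h4, h5, h6]
  ring

lemma coupling_prod {V : Type*} [Fintype V] [DecidableEq V] (c : Sym2 V → ℝ) (q : ℝ)
    (ω : Sym2 V → Bool) (T : Sym2 V → Set ℝ) :
    couplingMeasure c q ({ω} ×ˢ Set.pi Set.univ T)
      = ENNReal.ofReal (wFkP c q ω) * ∏ e, expMeasure 1 (T e) := by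
  haveI : ∀ i : Sym2 V, IsProbabilityMeasure ((fun _ : Sym2 V => expMeasure 1) i) :=
    fun _ => isProbabilityMeasure_expMeasure one_pos
  rw [couplingMeasure, Measure.prod_prod, Measure.pi_pi]
  congr 1
  rw [wFkMeasure, Measure.finset_sum_apply,
    Finset.sum_eq_single_of_mem ω (Finset.mem_univ ω)]
  · rw [Measure.smul_apply, Measure.dirac_apply_of_mem (Set.mem_singleton ω),
      smul_eq_mul, mul_one]
  · intro w _ hw
    rw [Measure.smul_apply, Measure.dirac_apply' _ (measurableSet_singleton ω),
      Set.indicator_of_notMem (by simp [hw])]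
    simp

end Aux

/-- Markov property of the dynamics: for `0 ≤ s ≤ t` and
configurations `v ≤ u ≤ ω`, conditionally on `w_s = v`,
`P(w_t = u, w = ω | w_s = v)
  = P(w = ω | w_s = v) (1 - e^{-(t-s)})^{o(u)-o(v)} (e^{-(t-s)})^{o(ω)-o(u)}`;
i.e. the pair `(w_t, w)` is a thinning pair built from the conditional law of `w`
given `w_s = v`. -/
theorem coupling_markov_property {V : Type*} [Fintype V] [DecidableEq V]
    (c : Sym2 V → ℝ) (hc0 : ∀ s, 0 ≤ c s) (hcdiag : ∀ s : Sym2 V, s.IsDiag → c s = 0)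
    (q : ℝ) (hq : 0 < q) (s t : ℝ) (hs : 0 ≤ s) (hst : s ≤ t)
    (v u ω : Sym2 V → Bool)
    (hvu : ∀ e, v e = true → u e = true) (huω : ∀ e, u e = true → ω e = true)
    (hv : 0 < couplingMeasure c q {x | dyn s x = v}) :
    (ProbabilityTheory.cond (couplingMeasure c q) {x | dyn s x = v}
        {x | dyn t x = u ∧ x.1 = ω}).toReal =
      (ProbabilityTheory.cond (couplingMeasure c q) {x | dyn s x = v}
          {x | x.1 = ω}).toReal *
        (1 - Real.exp (-(t - s))) ^ (openCount u - openCount v) *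
        Real.exp (-(t - s)) ^ (openCount ω - openCount u) := by
  classical
  -- basic positivity facts
  have hes1 : Real.exp (-s) ≤ 1 := Real.exp_le_one_iff.2 (by linarith)
  have hets : Real.exp (-t) ≤ Real.exp (-s) := Real.exp_le_exp.2 (by linarith)
  have het0 : (0:ℝ) ≤ Real.exp (-t) := (Real.exp_pos _).le
  have hr1 : Real.exp (-(t - s)) ≤ 1 := Real.exp_le_one_iff.2 (by linarith)
  have hr0 : (0:ℝ) ≤ Real.exp (-(t - s)) := (Real.exp_pos _).le
  -- the two intersections as product sets
  have hset1 : {x : (Sym2 V → Bool) × (Sym2 V → ℝ) | dyn s x = v}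
      ∩ {x | dyn t x = u ∧ x.1 = ω}
      = {ω} ×ˢ Set.pi Set.univ (fun e => if v e = true then Set.Iic s
          else if u e = true then Set.Ioc s t
          else if ω e = true then Set.Ioi t else Set.univ) := by
    ext ⟨w, ξ⟩
    constructor
    · rintro ⟨h1, h2, rfl⟩
      refine ⟨rfl, fun e _ => ?_⟩
      exact (edge_iff1 hst (v e) (u e) (w e) (hvu e) (huω e) (ξ e)).1
        ⟨congrFun h1 e, congrFun h2 e⟩
    · rintro ⟨rfl, h⟩
      have h' := fun e => (edge_iff1 hst (v e) (u e) (w e) (hvu e) (huω e) (ξ e)).2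
        (h e (Set.mem_univ e))
      exact ⟨funext fun e => (h' e).1, funext fun e => (h' e).2, rfl⟩
  have hset2 : {x : (Sym2 V → Bool) × (Sym2 V → ℝ) | dyn s x = v} ∩ {x | x.1 = ω}
      = {ω} ×ˢ Set.pi Set.univ (fun e => if v e = true then Set.Iic s
          else if ω e = true then Set.Ioi s
          else if ω e = true then Set.Ioi s else Set.univ) := by
    ext ⟨w, ξ⟩
    constructor
    · rintro ⟨h1, rfl⟩
      refine ⟨rfl, fun e _ => ?_⟩
      exact (edge_iff2 (v e) (w e) (fun hh => huω e (hvu e hh)) (ξ e)).1 (congrFun h1 e)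
    · rintro ⟨rfl, h⟩
      have h' := fun e => (edge_iff2 (v e) (w e) (fun hh => huω e (hvu e hh)) (ξ e)).2
        (h e (Set.mem_univ e))
      exact ⟨funext fun e => h' e, rfl⟩
  -- measures of the two intersections
  have hm1 : couplingMeasure c q ({x | dyn s x = v} ∩ {x | dyn t x = u ∧ x.1 = ω})
      = ENNReal.ofReal (wFkP c q ω) * ENNReal.ofReal
        ((1 - Real.exp (-s)) ^ openCount v
          * (Real.exp (-s) - Real.exp (-t)) ^ (openCount u - openCount v)
          * Real.exp (-t) ^ (openCount ω - openCount u)) := by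
    rw [hset1, coupling_prod]
    congr 1
    have hval : ∀ e : Sym2 V, ProbabilityTheory.expMeasure 1
        (if v e = true then Set.Iic s else if u e = true then Set.Ioc s t
          else if ω e = true then Set.Ioi t else Set.univ)
        = ENNReal.ofReal (if v e = true then 1 - Real.exp (-s)
            else if u e = true then Real.exp (-s) - Real.exp (-t)
            else if ω e = true then Real.exp (-t) else 1) := by
      intro e
      haveI : IsProbabilityMeasure (ProbabilityTheory.expMeasure (1:ℝ)) :=
        ProbabilityTheory.isProbabilityMeasure_expMeasure one_pos
      split_ifs
      · exact myExp_Iic hs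
      · exact myExp_Ioc hs hst
      · exact myExp_Ioi (hs.trans hst)
      · simp
    rw [Finset.prod_congr rfl (fun e _ => hval e),
      ← ENNReal.ofReal_prod_of_nonneg (fun e _ => by split_ifs <;> linarith),
      prod_split v u ω hvu huω]
  have hm2 : couplingMeasure c q ({x | dyn s x = v} ∩ {x | x.1 = ω})
      = ENNReal.ofReal (wFkP c q ω) * ENNReal.ofReal
        ((1 - Real.exp (-s)) ^ openCount v
          * Real.exp (-s) ^ (openCount ω - openCount v)
          * Real.exp (-s) ^ (openCount ω - openCount ω)) := by
    rw [hset2, coupling_prod]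
    congr 1
    have hval : ∀ e : Sym2 V, ProbabilityTheory.expMeasure 1
        (if v e = true then Set.Iic s else if ω e = true then Set.Ioi s
          else if ω e = true then Set.Ioi s else Set.univ)
        = ENNReal.ofReal (if v e = true then 1 - Real.exp (-s)
            else if ω e = true then Real.exp (-s)
            else if ω e = true then Real.exp (-s) else 1) := by
      intro e
      haveI : IsProbabilityMeasure (ProbabilityTheory.expMeasure (1:ℝ)) :=
        ProbabilityTheory.isProbabilityMeasure_expMeasure one_pos
      split_ifs
      · exact myExp_Iic hs
      · exact myExp_Ioi hs
      · simp
    rw [Finset.prod_congr rfl (fun e _ => hval e),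
      ← ENNReal.ofReal_prod_of_nonneg (fun e _ => by split_ifs <;> linarith),
      prod_split v ω ω (fun e hh => huω e (hvu e hh)) (fun e hh => hh)]
  -- measurability of the conditioning event
  have hA : MeasurableSet {x : (Sym2 V → Bool) × (Sym2 V → ℝ) | dyn s x = v} := by
    have h : {x : (Sym2 V → Bool) × (Sym2 V → ℝ) | dyn s x = v} = dyn s ⁻¹' {v} := rfl
    rw [h]
    exact measurable_dyn s (measurableSet_singleton v)
  -- finiteness
  haveI : IsFiniteMeasure (wFkMeasure c q) := by
    constructor
    rw [wFkMeasure, Measure.finset_sum_apply]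
    refine ENNReal.sum_lt_top.2 fun w _ => ?_
    simp [Measure.smul_apply]
  haveI : ∀ i : Sym2 V, IsProbabilityMeasure
      ((fun _ : Sym2 V => ProbabilityTheory.expMeasure 1) i) :=
    fun _ => ProbabilityTheory.isProbabilityMeasure_expMeasure one_pos
  haveI : IsFiniteMeasure (couplingMeasure c q) := by
    rw [couplingMeasure]; infer_instance
  have hDtop : couplingMeasure c q {x | dyn s x = v} ≠ ⊤ := measure_ne_top _ _
  -- conditional probabilities
  rw [ProbabilityTheory.cond_apply hA, ProbabilityTheory.cond_apply hA, hm1, hm2]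
  have hR1 : (0:ℝ) ≤ (1 - Real.exp (-s)) ^ openCount v
      * (Real.exp (-s) - Real.exp (-t)) ^ (openCount u - openCount v)
      * Real.exp (-t) ^ (openCount ω - openCount u) :=
    mul_nonneg (mul_nonneg (pow_nonneg (by linarith) _) (pow_nonneg (by linarith) _))
      (pow_nonneg het0 _)
  have hR2 : (0:ℝ) ≤ (1 - Real.exp (-s)) ^ openCount v
      * Real.exp (-s) ^ (openCount ω - openCount v)
      * Real.exp (-s) ^ (openCount ω - openCount ω) :=
    mul_nonneg (mul_nonneg (pow_nonneg (by linarith) _) (pow_nonneg (by linarith) _))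
      (pow_nonneg (by linarith) _)
  simp only [ENNReal.toReal_mul]
  rw [ENNReal.toReal_ofReal hR1, ENNReal.toReal_ofReal hR2]
  -- the real identity
  have hcv : openCount v ≤ openCount u := openCount_mono hvu
  have hcu : openCount u ≤ openCount ω := openCount_mono huω
  have hsplit : openCount ω - openCount v
      = (openCount u - openCount v) + (openCount ω - openCount u) := by omega
  have hmul : Real.exp (-s) * Real.exp (-(t - s)) = Real.exp (-t) := by
    rw [← Real.exp_add]; congr 1; ring
  have her : Real.exp (-s) - Real.exp (-t)
      = Real.exp (-s) * (1 - Real.exp (-(t - s))) := by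
    rw [mul_sub, mul_one, hmul]
  have het : Real.exp (-t) = Real.exp (-s) * Real.exp (-(t - s)) := hmul.symm
  have hkey : (1 - Real.exp (-s)) ^ openCount v
        * (Real.exp (-s) - Real.exp (-t)) ^ (openCount u - openCount v)
        * Real.exp (-t) ^ (openCount ω - openCount u)
      = ((1 - Real.exp (-s)) ^ openCount v
          * Real.exp (-s) ^ (openCount ω - openCount v)
          * Real.exp (-s) ^ (openCount ω - openCount ω))
        * (1 - Real.exp (-(t - s))) ^ (openCount u - openCount v)
        * Real.exp (-(t - s)) ^ (openCount ω - openCount u) := by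
    rw [her, het, Nat.sub_self, pow_zero, hsplit, pow_add, mul_pow, mul_pow]
    ring
  rw [hkey]
  ring
end
end
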